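/- arXiv:2508.12598 — 6 statements merged into one kernel-verified Lean document; each statement's English description precedes it below -/
import Mathlib

section
/- Two regular semi-simple elements y, y' ∈ s_{n+1} lie in the same GL_n(ℝ)-orbit if and only if Inv(y) = Inv(y'), where Inv(y) = (char(y₀;T), wv, wy₀v, ..., wy₀^{n-1}v, d) for y in block form [[y₀,v],[w,d]]. -/
open Matrix MeasureTheory

noncomputable section

/-- The space `s_{n+1} = {y ∈ M_{n+1}(ℂ) | y + ȳ = 0}` (entrywise conjugation). -/
def sSet (n : ℕ) : Set (Matrix (Fin (n+1)) (Fin (n+1)) ℂ) :=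
  {y | y + y.map (starRingEnd ℂ) = 0}

/-- The embedding `g ↦ diag(g, 1)` of `n×n` matrices into `(n+1)×(n+1)` matrices. -/
def dgC {n : ℕ} (g : Matrix (Fin n) (Fin n) ℂ) : Matrix (Fin (n+1)) (Fin (n+1)) ℂ :=
  Matrix.reindex finSumFinEquiv finSumFinEquiv
    (Matrix.fromBlocks g 0 0 (1 : Matrix (Fin 1) (Fin 1) ℂ))

/-- The real version of `diag(H, 1)`. -/
def dgR {n : ℕ} (H : Matrix (Fin n) (Fin n) ℝ) : Matrix (Fin (n+1)) (Fin (n+1)) ℝ :=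
  Matrix.reindex finSumFinEquiv finSumFinEquiv
    (Matrix.fromBlocks H 0 0 (1 : Matrix (Fin 1) (Fin 1) ℝ))

/-- The action of `GL_n(ℝ)` on `(n+1)×(n+1)` complex matrices:
`g · y = diag(g,1) y diag(g,1)⁻¹`. -/
def mact {n : ℕ} (g : GL (Fin n) ℝ) (y : Matrix (Fin (n+1)) (Fin (n+1)) ℂ) :
    Matrix (Fin (n+1)) (Fin (n+1)) ℂ :=
  dgC (((g : Matrix (Fin n) (Fin n) ℝ)).map (fun r : ℝ => (r : ℂ))) * y *
    dgC ((((g⁻¹ : GL (Fin n) ℝ) : Matrix (Fin n) (Fin n) ℝ)).map (fun r : ℝ => (r : ℂ)))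

/-- The upper-left `n×n` block `y₀` of `y`. -/
def blk0 {n : ℕ} (y : Matrix (Fin (n+1)) (Fin (n+1)) ℂ) : Matrix (Fin n) (Fin n) ℂ :=
  Matrix.of fun i j => y i.castSucc j.castSucc

/-- The last-column block `v` of `y` (a column vector). -/
def blkv {n : ℕ} (y : Matrix (Fin (n+1)) (Fin (n+1)) ℂ) : Fin n → ℂ :=
  fun i => y i.castSucc (Fin.last n)

/-- The last-row block `w` of `y` (a row vector). -/
def blkw {n : ℕ} (y : Matrix (Fin (n+1)) (Fin (n+1)) ℂ) : Fin n → ℂ :=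
  fun j => y (Fin.last n) j.castSucc

/-- The lower-right entry `d` of `y`. -/
def blkd {n : ℕ} (y : Matrix (Fin (n+1)) (Fin (n+1)) ℂ) : ℂ :=
  y (Fin.last n) (Fin.last n)

/-- The spanning characterization of regular semi-simplicity:
`ℂ[y₀]·v = ℂⁿ` and `w·ℂ[y₀] = ℂ_n`. -/
def RSspan {n : ℕ} (y : Matrix (Fin (n+1)) (Fin (n+1)) ℂ) : Prop :=
  Submodule.span ℂ {u : Fin n → ℂ | ∃ k : ℕ, u = (blk0 y ^ k) *ᵥ blkv y} = ⊤ ∧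
  Submodule.span ℂ {u : Fin n → ℂ | ∃ k : ℕ, u = blkw y ᵥ* (blk0 y ^ k)} = ⊤

/-- The Jacquet–Rallis invariant `Inv(y) = (char(y₀;T), w v, w y₀ v, …, w y₀^{n-1} v, d)`. -/
def InvS {n : ℕ} (y : Matrix (Fin (n+1)) (Fin (n+1)) ℂ) :
    Polynomial ℂ × (Fin n → ℂ) × ℂ :=
  ((blk0 y).charpoly, fun k => blkw y ⬝ᵥ ((blk0 y ^ (k : ℕ)) *ᵥ blkv y), blkd y)

/-- The Lie algebra `u(n+1)` of the compact unitary group: `x* = -x`. -/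
def uSet (n : ℕ) : Set (Matrix (Fin (n+1)) (Fin (n+1)) ℂ) :=
  {x | xᴴ = -x}

/-- Regular semi-simplicity on the unitary side: `ℂ[x₀]·u = ℂⁿ`. -/
def RSspanU {n : ℕ} (x : Matrix (Fin (n+1)) (Fin (n+1)) ℂ) : Prop :=
  Submodule.span ℂ {u : Fin n → ℂ | ∃ k : ℕ, u = (blk0 x ^ k) *ᵥ blkv x} = ⊤

/-- The invariant on the unitary side,
`Inv(x) = (char(x₀;T), -(u,u), …, -(u, x₀^{n-1} u), d)`, with the standard
positive definite hermitian form `(a,b) = star a ⬝ᵥ b`. -/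
def InvU {n : ℕ} (x : Matrix (Fin (n+1)) (Fin (n+1)) ℂ) :
    Polynomial ℂ × (Fin n → ℂ) × ℂ :=
  ((blk0 x).charpoly,
   fun k => -(star (blkv x) ⬝ᵥ ((blk0 x ^ (k : ℕ)) *ᵥ blkv x)),
   blkd x)

/-- `y` matches to signature `(n,0)`: there is a matching regular semi-simple element
of `u(n+1)` (the positive definite case). -/
def MatchesN0 {n : ℕ} (y : Matrix (Fin (n+1)) (Fin (n+1)) ℂ) : Prop :=
  ∃ x ∈ uSet n, RSspanU x ∧ InvS y = InvU x

/-- The real "arrow" matrix with diagonal `(λ₁,…,λₙ,d)` and last row/column `μ₁,…,μₙ`. -/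
def arrow {n : ℕ} (lam mu : Fin n → ℝ) (d : ℝ) : Matrix (Fin (n+1)) (Fin (n+1)) ℝ :=
  Matrix.reindex finSumFinEquiv finSumFinEquiv
    (Matrix.fromBlocks (Matrix.diagonal lam)
      (Matrix.of fun i (_ : Fin 1) => mu i)
      (Matrix.of fun (_ : Fin 1) j => mu j)
      (Matrix.of fun _ _ => d))

/-- `i·A` for a real matrix `A`, viewed inside `M_{n+1}(ℂ)`. -/
def iM {n : ℕ} (A : Matrix (Fin (n+1)) (Fin (n+1)) ℝ) : Matrix (Fin (n+1)) (Fin (n+1)) ℂ :=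
  Complex.I • (A.map fun r : ℝ => (r : ℂ))

/-- The element `i·M` of `s_{n+1}` attached to arrow data. -/
def iArrow {n : ℕ} (lam mu : Fin n → ℝ) (d : ℝ) : Matrix (Fin (n+1)) (Fin (n+1)) ℂ :=
  iM (arrow lam mu d)

/-- A real-valued polynomial function on a real vector space: an element of the
subalgebra of functions generated by the linear functionals. -/
def IsPolyFun {V : Type*} [AddCommGroup V] [Module ℝ V] (f : V → ℝ) : Prop :=
  f ∈ Algebra.adjoin ℝ (Set.range fun l : V →ₗ[ℝ] ℝ => ⇑l)

/-- Zariski-closed subsets of a real vector space: common zero loci of families of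
polynomial functions. -/
def IsRZClosed {V : Type*} [AddCommGroup V] [Module ℝ V] (s : Set V) : Prop :=
  ∃ T : Set (V → ℝ), (∀ f ∈ T, IsPolyFun f) ∧ s = {x | ∀ f ∈ T, f x = 0}

/-- Regular semi-simplicity as defined in the paper: trivial `GL_n(ℝ)`-stabilizer
and Zariski-closed orbit. -/
def RSdef {n : ℕ} (y : Matrix (Fin (n+1)) (Fin (n+1)) ℂ) : Prop :=
  (∀ g : GL (Fin n) ℝ, mact g y = y → g = 1) ∧
  IsRZClosed {z | ∃ g : GL (Fin n) ℝ, z = mact g y}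

/-- The set `𝔖` of regular semi-simple elements of `s_{n+1}` matching signature `(n,0)`. -/
def frakS (n : ℕ) : Set (Matrix (Fin (n+1)) (Fin (n+1)) ℂ) :=
  {y | y ∈ sSet n ∧ RSspan y ∧ MatchesN0 y}


namespace JR
open Matrix

variable {n : ℕ}

lemma symm_castSucc (i : Fin n) :
    finSumFinEquiv.symm (i.castSucc : Fin (n+1)) = Sum.inl i := by
  rw [Equiv.symm_apply_eq]
  rfl

lemma symm_last :
    finSumFinEquiv.symm (Fin.last n) = Sum.inr (0 : Fin 1) := by
  rw [Equiv.symm_apply_eq]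
  ext
  simp [finSumFinEquiv]

/-- Build an `(n+1)×(n+1)` matrix from blocks. -/
def mk4 (A : Matrix (Fin n) (Fin n) ℂ) (v w : Fin n → ℂ) (d : ℂ) :
    Matrix (Fin (n+1)) (Fin (n+1)) ℂ :=
  Matrix.reindex finSumFinEquiv finSumFinEquiv
    (Matrix.fromBlocks A (Matrix.of fun i (_ : Fin 1) => v i)
      (Matrix.of fun (_ : Fin 1) j => w j) (Matrix.of fun _ _ => d))

@[simp] lemma blk0_mk4 (A : Matrix (Fin n) (Fin n) ℂ) (v w : Fin n → ℂ) (d : ℂ) :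
    blk0 (mk4 A v w d) = A := by
  ext i j
  simp [mk4, blk0, Matrix.reindex_apply, symm_castSucc]

@[simp] lemma blkv_mk4 (A : Matrix (Fin n) (Fin n) ℂ) (v w : Fin n → ℂ) (d : ℂ) :
    blkv (mk4 A v w d) = v := by
  ext i
  simp [mk4, blkv, Matrix.reindex_apply, symm_castSucc, symm_last]

@[simp] lemma blkw_mk4 (A : Matrix (Fin n) (Fin n) ℂ) (v w : Fin n → ℂ) (d : ℂ) :
    blkw (mk4 A v w d) = w := by
  ext j
  simp [mk4, blkw, Matrix.reindex_apply, symm_castSucc, symm_last]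

@[simp] lemma blkd_mk4 (A : Matrix (Fin n) (Fin n) ℂ) (v w : Fin n → ℂ) (d : ℂ) :
    blkd (mk4 A v w d) = d := by
  simp [mk4, blkd, Matrix.reindex_apply, symm_last]

lemma eq_mk4 (y : Matrix (Fin (n+1)) (Fin (n+1)) ℂ) :
    y = mk4 (blk0 y) (blkv y) (blkw y) (blkd y) := by
  ext i j
  simp only [mk4, Matrix.reindex_apply, Matrix.submatrix_apply]
  induction i using Fin.lastCases with
  | last =>
    induction j using Fin.lastCases with
    | last => simp [symm_last, blkd]
    | cast j => simp [symm_last, symm_castSucc, blkw]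
  | cast i =>
    induction j using Fin.lastCases with
    | last => simp [symm_last, symm_castSucc, blkv]
    | cast j => simp [symm_castSucc, blk0]

end JR
namespace JR
open Matrix
variable {n : ℕ}

lemma dgC_mul_mk4_mul_dgC (a b A : Matrix (Fin n) (Fin n) ℂ) (v w : Fin n → ℂ) (d : ℂ) :
    dgC a * mk4 A v w d * dgC b = mk4 (a * A * b) (a *ᵥ v) (w ᵥ* b) d := by
  simp only [dgC, mk4, Matrix.reindex_apply, Matrix.submatrix_mul_equiv,
    Matrix.fromBlocks_multiply, Matrix.zero_mul, Matrix.mul_zero, add_zero, zero_add,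
    Matrix.one_mul, Matrix.mul_one]
  congr 2

end JR
namespace JR
open Matrix Polynomial
variable {n : ℕ}

lemma charpoly_unit_conj (u : (Matrix (Fin n) (Fin n) ℂ)ˣ) (A : Matrix (Fin n) (Fin n) ℂ) :
    ((u : Matrix (Fin n) (Fin n) ℂ) * A * ((u⁻¹ : (Matrix (Fin n) (Fin n) ℂ)ˣ) : Matrix (Fin n) (Fin n) ℂ)).charpoly
      = A.charpoly := by
  let f : Matrix (Fin n) (Fin n) ℂ →+* Matrix (Fin n) (Fin n) ℂ[X] :=
    (Polynomial.C : ℂ →+* ℂ[X]).mapMatrix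
  let u' := Units.map f.toMonoidHom u
  have hcoe : (↑u' : Matrix (Fin n) (Fin n) ℂ[X]) = f ↑u := rfl
  have hcoe' : (↑u'⁻¹ : Matrix (Fin n) (Fin n) ℂ[X]) = f ↑u⁻¹ := rfl
  have hscal : ∀ M : Matrix (Fin n) (Fin n) ℂ[X],
      Matrix.scalar (Fin n) (X : ℂ[X]) * M = M * Matrix.scalar (Fin n) (X : ℂ[X]) :=
    fun M => (Matrix.scalar_commute (X : ℂ[X]) (fun r => mul_comm _ _) M)
  have hc : charmatrix ((u : Matrix (Fin n) (Fin n) ℂ) * A *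
        ((u⁻¹ : (Matrix (Fin n) (Fin n) ℂ)ˣ) : Matrix (Fin n) (Fin n) ℂ))
      = (u' : Matrix (Fin n) (Fin n) ℂ[X]) * charmatrix A *
        ((u'⁻¹ : (Matrix (Fin n) (Fin n) ℂ[X])ˣ) : Matrix (Fin n) (Fin n) ℂ[X]) := by
    rw [charmatrix, charmatrix, Matrix.mul_sub, Matrix.sub_mul]
    congr 1
    · rw [Matrix.mul_assoc, hscal, ← Matrix.mul_assoc, u'.mul_inv, Matrix.one_mul]
    · rw [hcoe, hcoe', _root_.map_mul, _root_.map_mul]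
  rw [Matrix.charpoly, Matrix.charpoly, hc, Matrix.det_mul, Matrix.det_mul,
    mul_comm, ← mul_assoc, ← Matrix.det_mul, u'.inv_mul, Matrix.det_one, one_mul]

/-- Cayley–Hamilton applied to a vector. -/
lemma pow_card_mulVec (A : Matrix (Fin n) (Fin n) ℂ) (v : Fin n → ℂ) :
    (A ^ n) *ᵥ v = -(∑ j ∈ Finset.range n, A.charpoly.coeff j • ((A ^ j) *ᵥ v)) := by
  have hdeg : A.charpoly.natDegree = n := by
    simpa using A.charpoly_natDegree_eq_dim
  have h0 : (0 : Matrix (Fin n) (Fin n) ℂ) =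
      ∑ j ∈ Finset.range (n + 1), A.charpoly.coeff j • A ^ j := by
    have := A.aeval_self_charpoly
    rw [Polynomial.aeval_eq_sum_range, hdeg] at this
    exact this.symm
  have h1 : A ^ n = -(∑ j ∈ Finset.range n, A.charpoly.coeff j • A ^ j) := by
    rw [Finset.sum_range_succ] at h0
    have hcoeff : A.charpoly.coeff n = 1 := by
      have := A.charpoly_monic.coeff_natDegree
      rwa [hdeg] at this
    rw [hcoeff, one_smul] at h0
    exact eq_neg_of_add_eq_zero_right h0.symm
  have key : ∀ (f : ℕ → Matrix (Fin n) (Fin n) ℂ),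
      (∑ j ∈ Finset.range n, f j) *ᵥ v = ∑ j ∈ Finset.range n, (f j *ᵥ v) := by
    intro f
    ext i
    simp only [Matrix.mulVec, dotProduct, Matrix.sum_apply, Finset.sum_mul,
      Finset.sum_apply]
    rw [Finset.sum_comm]
  rw [h1, Matrix.neg_mulVec, key]
  congr 1
  exact Finset.sum_congr rfl fun j _ => Matrix.smul_mulVec _ _ _

end JR
namespace JR
open Matrix Polynomial
variable {n : ℕ}

/-- The matrix whose columns are `A^k v`, `k = 0, …, n-1`. -/
def Cm (A : Matrix (Fin n) (Fin n) ℂ) (v : Fin n → ℂ) : Matrix (Fin n) (Fin n) ℂ :=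
  Matrix.of fun i k => ((A ^ (k : ℕ)) *ᵥ v) i

/-- The companion-type matrix of a polynomial. -/
def Kmat (n : ℕ) (p : Polynomial ℂ) : Matrix (Fin n) (Fin n) ℂ :=
  Matrix.of fun j k => if (k : ℕ) + 1 = n then -(p.coeff j)
    else if (j : ℕ) = (k : ℕ) + 1 then 1 else 0

/-- The diagonal sign matrix `diag((-1)^{k+1})`. -/
def Dmat (n : ℕ) : Matrix (Fin n) (Fin n) ℂ :=
  Matrix.diagonal fun k => (-1 : ℂ) ^ ((k : ℕ) + 1)

lemma Dmat_mul_Dmat : Dmat n * Dmat n = 1 := by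
  rw [Dmat, Matrix.diagonal_mul_diagonal]
  convert Matrix.diagonal_one with k
  rw [← pow_add]
  exact (neg_one_pow_eq_one_iff_even (by norm_num)).2 ⟨(k:ℕ)+1, by ring⟩

lemma Cm_mulVec_single (A : Matrix (Fin n) (Fin n) ℂ) (v : Fin n → ℂ) (k : Fin n) :
    Cm A v *ᵥ Pi.single k 1 = (A ^ (k : ℕ)) *ᵥ v := by
  ext i
  simp only [Cm, Matrix.mulVec, dotProduct, Matrix.of_apply, Pi.single_apply,
    mul_ite, mul_one, mul_zero, Finset.sum_ite_eq', Finset.mem_univ, if_true]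

lemma mul_Cm (A : Matrix (Fin n) (Fin n) ℂ) (v : Fin n → ℂ) :
    A * Cm A v = Cm A v * Kmat n A.charpoly := by
  ext i k
  have hlhs : (A * Cm A v) i k = ((A ^ ((k : ℕ) + 1)) *ᵥ v) i := by
    rw [pow_succ', ← Matrix.mulVec_mulVec]
    simp [Matrix.mul_apply, Cm, Matrix.mulVec, dotProduct]
  rw [hlhs, Matrix.mul_apply]
  by_cases hk : (k : ℕ) + 1 = n
  · simp only [Kmat, Matrix.of_apply, if_pos hk]
    rw [hk, pow_card_mulVec]
    simp only [Pi.neg_apply, Finset.sum_apply, Pi.smul_apply, smul_eq_mul]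
    rw [← Fin.sum_univ_eq_sum_range (fun j => A.charpoly.coeff j * ((A ^ j) *ᵥ v) i), ← Finset.sum_neg_distrib]
    exact Finset.sum_congr rfl fun j _ => by simp [Cm]; ring
  · have hkk := k.isLt
    have hk' : (k : ℕ) + 1 < n := by omega
    simp only [Kmat, Matrix.of_apply, if_neg hk, mul_ite, mul_one, mul_zero]
    rw [Finset.sum_eq_single (⟨(k : ℕ) + 1, hk'⟩ : Fin n)]
    · simp [Cm]
    · intro j _ hj
      rw [if_neg]
      exact fun h => hj (Fin.ext h)
    · intro h
      exact absurd (Finset.mem_univ _) h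

end JR
namespace JR
open Matrix Polynomial
variable {n : ℕ}

lemma isUnit_Cm (A : Matrix (Fin n) (Fin n) ℂ) (v : Fin n → ℂ)
    (hspan : Submodule.span ℂ {u : Fin n → ℂ | ∃ k : ℕ, u = (A ^ k) *ᵥ v} = ⊤) :
    IsUnit (Cm A v) := by
  rcases Nat.eq_zero_or_pos n with h0 | hn
  · haveI : IsEmpty (Fin n) := by subst h0; infer_instance
    exact (Matrix.isUnit_iff_isUnit_det _).2 (by simp [Matrix.det_isEmpty])
  · rw [← Matrix.mulVec_surjective_iff_isUnit]
    set R := LinearMap.range (Matrix.mulVecLin (Cm A v)) with hRdef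
    have hcol : ∀ k : Fin n, (A ^ (k : ℕ)) *ᵥ v ∈ R :=
      fun k => ⟨Pi.single k 1, Cm_mulVec_single A v k⟩
    have hall : ∀ k : ℕ, (A ^ k) *ᵥ v ∈ R := by
      intro k
      induction k using Nat.strong_induction_on with
      | _ k ih =>
        by_cases hk : k < n
        · simpa using hcol ⟨k, hk⟩
        · push_neg at hk
          have hsplit : (A ^ k) *ᵥ v = (A ^ (k - n)) *ᵥ ((A ^ n) *ᵥ v) := by
            rw [Matrix.mulVec_mulVec, ← pow_add, Nat.sub_add_cancel hk]
          have hdist : (A ^ (k - n)) *ᵥ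
              (∑ j ∈ Finset.range n, A.charpoly.coeff j • ((A ^ j) *ᵥ v)) =
              ∑ j ∈ Finset.range n, A.charpoly.coeff j • ((A ^ (k - n + j)) *ᵥ v) := by
            rw [← Matrix.mulVecLin_apply, map_sum]
            refine Finset.sum_congr rfl fun j _ => ?_
            rw [_root_.map_smul, Matrix.mulVecLin_apply, Matrix.mulVec_mulVec, ← pow_add]
          rw [hsplit, pow_card_mulVec, Matrix.mulVec_neg, hdist]
          refine neg_mem (Submodule.sum_mem _ fun j hj => Submodule.smul_mem _ _ ?_)
          refine ih _ ?_
          have := Finset.mem_range.mp hj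
          omega
    intro u
    have hle : Submodule.span ℂ {u : Fin n → ℂ | ∃ k : ℕ, u = (A ^ k) *ᵥ v} ≤ R :=
      Submodule.span_le.mpr (by rintro _ ⟨k, rfl⟩; exact hall k)
    have hu : u ∈ R := hle (by rw [hspan]; trivial)
    obtain ⟨x, hx⟩ := hu
    exact ⟨x, hx⟩

lemma map_star_Cm (A : Matrix (Fin n) (Fin n) ℂ) (v : Fin n → ℂ)
    (hA : A.map (starRingEnd ℂ) = -A) (hv : (fun i => (starRingEnd ℂ) (v i)) = -v) :
    (Cm A v).map (starRingEnd ℂ) = Cm A v * Dmat n := by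
  ext i k
  have h1 : (starRingEnd ℂ) (((A ^ (k : ℕ)) *ᵥ v) i)
      = (((A ^ (k : ℕ)).map (starRingEnd ℂ)) *ᵥ (fun j => (starRingEnd ℂ) (v j))) i := by
    simp [Matrix.mulVec, dotProduct, map_sum, _root_.map_mul]
  have h2 : (A ^ (k : ℕ)).map (starRingEnd ℂ) = ((-1 : ℂ) ^ (k : ℕ)) • (A ^ (k : ℕ)) := by
    rw [show (A ^ (k:ℕ)).map (starRingEnd ℂ)
        = (starRingEnd ℂ).mapMatrix (A ^ (k : ℕ)) from rfl, map_pow,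
      RingHom.mapMatrix_apply, hA, ← neg_one_smul ℂ A, _root_.smul_pow]
  rw [Matrix.map_apply, Matrix.mul_apply]
  rw [show Cm A v i k = ((A ^ (k : ℕ)) *ᵥ v) i from rfl] at *
  rw [h1, hv, h2, Matrix.smul_mulVec, Matrix.mulVec_neg]
  have : ∑ j, Cm A v i j * Dmat n j k = ((A ^ (k:ℕ)) *ᵥ v) i * (-1 : ℂ) ^ ((k:ℕ)+1) := by
    rw [← Matrix.mul_apply, Dmat, Matrix.mul_diagonal]
    rfl
  rw [this]
  simp [pow_succ]
  ring

end JR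
namespace JR
open Matrix Polynomial
variable {n : ℕ}

lemma conj_pow {A B C : Matrix (Fin n) (Fin n) ℂ} (hBA : B * A = 1) (hAB : A * B = 1)
    (k : ℕ) : (A * C * B) ^ k = A * C ^ k * B := by
  induction k with
  | zero => simp [hAB]
  | succ k ih =>
    rw [pow_succ, ih, pow_succ,
      show A * C ^ k * B * (A * C * B) = A * (C ^ k * ((B * A) * (C * B))) by
        simp only [Matrix.mul_assoc],
      hBA, Matrix.one_mul]
    simp only [Matrix.mul_assoc]

/-- Entrywise-conjugation relations for elements of `s_{n+1}`. -/
lemma sSet_blk0 {y : Matrix (Fin (n+1)) (Fin (n+1)) ℂ} (hy : y ∈ sSet n) :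
    (blk0 y).map (starRingEnd ℂ) = -(blk0 y) := by
  have h : ∀ i j, (starRingEnd ℂ) (y i j) = -(y i j) := by
    intro i j
    have := congrFun (congrFun (hy : y + y.map (starRingEnd ℂ) = 0) i) j
    simp only [Matrix.add_apply, Matrix.map_apply, Matrix.zero_apply] at this
    linear_combination this
  ext i j
  simp [blk0, h]

lemma sSet_blkv {y : Matrix (Fin (n+1)) (Fin (n+1)) ℂ} (hy : y ∈ sSet n) :
    (fun i => (starRingEnd ℂ) (blkv y i)) = -(blkv y) := by
  have h : ∀ i j, (starRingEnd ℂ) (y i j) = -(y i j) := by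
    intro i j
    have := congrFun (congrFun (hy : y + y.map (starRingEnd ℂ) = 0) i) j
    simp only [Matrix.add_apply, Matrix.map_apply, Matrix.zero_apply] at this
    linear_combination this
  funext i
  simp [blkv, h]

end JR
/-- two regular semi-simple elements of `s_{n+1}` lie in the same
`GL_n(ℝ)`-orbit iff they have the same invariant. -/
theorem stmt1 (n : ℕ) (y y' : Matrix (Fin (n+1)) (Fin (n+1)) ℂ)
    (hy : y ∈ sSet n) (hy' : y' ∈ sSet n) (hrs : RSspan y) (hrs' : RSspan y') :
    (∃ g : GL (Fin n) ℝ, mact g y = y') ↔ InvS y = InvS y' := by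
  constructor
  · rintro ⟨g, rfl⟩
    -- forward direction
    set A : Matrix (Fin n) (Fin n) ℂ :=
      ((g : Matrix (Fin n) (Fin n) ℝ)).map (fun r : ℝ => (r : ℂ)) with hAdef
    set B : Matrix (Fin n) (Fin n) ℂ :=
      (((g⁻¹ : GL (Fin n) ℝ) : Matrix (Fin n) (Fin n) ℝ)).map (fun r : ℝ => (r : ℂ)) with hBdef
    let f : Matrix (Fin n) (Fin n) ℝ →+* Matrix (Fin n) (Fin n) ℂ :=
      Complex.ofRealHom.mapMatrix
    have hAf : A = f (g : Matrix (Fin n) (Fin n) ℝ) := rfl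
    have hBf : B = f ((g⁻¹ : GL (Fin n) ℝ) : Matrix (Fin n) (Fin n) ℝ) := rfl
    have hAB : A * B = 1 := by
      rw [hAf, hBf, ← _root_.map_mul, Units.mul_inv, _root_.map_one]
    have hBA : B * A = 1 := by
      rw [hAf, hBf, ← _root_.map_mul, Units.inv_mul, _root_.map_one]
    have hblocks : mact g y = JR.mk4 (A * blk0 y * B) (A *ᵥ blkv y) (blkw y ᵥ* B) (blkd y) := by
      calc mact g y = dgC A * JR.mk4 (blk0 y) (blkv y) (blkw y) (blkd y) * dgC B := by
            rw [← JR.eq_mk4 y]; rfl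
        _ = _ := JR.dgC_mul_mk4_mul_dgC A B (blk0 y) (blkv y) (blkw y) (blkd y)
    let u : (Matrix (Fin n) (Fin n) ℂ)ˣ := Units.map f.toMonoidHom g
    have hu : (u : Matrix (Fin n) (Fin n) ℂ) = A := rfl
    have hu' : ((u⁻¹ : (Matrix (Fin n) (Fin n) ℂ)ˣ) : Matrix (Fin n) (Fin n) ℂ) = B := rfl
    rw [InvS, InvS, hblocks]
    simp only [JR.blk0_mk4, JR.blkv_mk4, JR.blkw_mk4, JR.blkd_mk4]
    refine Prod.ext ?_ (Prod.ext ?_ rfl)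
    · show (blk0 y).charpoly = (A * blk0 y * B).charpoly
      rw [← hu, ← hu', JR.charpoly_unit_conj u (blk0 y)]
    · show (fun k : Fin n => blkw y ⬝ᵥ ((blk0 y ^ (k : ℕ)) *ᵥ blkv y)) = _
      funext k
      show blkw y ⬝ᵥ ((blk0 y ^ (k : ℕ)) *ᵥ blkv y)
        = (blkw y ᵥ* B) ⬝ᵥ (((A * blk0 y * B) ^ (k : ℕ)) *ᵥ (A *ᵥ blkv y))
      rw [JR.conj_pow hBA hAB, Matrix.mulVec_mulVec,
        show A * blk0 y ^ (k : ℕ) * B * A = A * blk0 y ^ (k : ℕ) * (B * A) by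
          simp only [Matrix.mul_assoc],
        hBA, Matrix.mul_one, Matrix.dotProduct_mulVec, Matrix.dotProduct_mulVec,
        Matrix.vecMul_vecMul,
        show B * (A * blk0 y ^ (k : ℕ)) = (B * A) * blk0 y ^ (k : ℕ) by
          simp only [Matrix.mul_assoc],
        hBA, Matrix.one_mul]
  · intro hInv
    have hp : (blk0 y).charpoly = (blk0 y').charpoly := congrArg Prod.fst hInv
    have hmk : ∀ k : Fin n, blkw y ⬝ᵥ ((blk0 y ^ (k : ℕ)) *ᵥ blkv y)
        = blkw y' ⬝ᵥ ((blk0 y' ^ (k : ℕ)) *ᵥ blkv y') :=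
      fun k => congrFun (congrArg (fun z => z.2.1) hInv) k
    have hd : blkd y = blkd y' := congrArg (fun z => z.2.2) hInv
    rcases Nat.eq_zero_or_pos n with hn | hn
    · -- trivial case n = 0
      refine ⟨1, ?_⟩
      have h1 : mact 1 y = JR.mk4 ((1 : Matrix (Fin n) (Fin n) ℂ) * blk0 y * 1)
          ((1 : Matrix (Fin n) (Fin n) ℂ) *ᵥ blkv y) (blkw y ᵥ* (1 : Matrix (Fin n) (Fin n) ℂ))
          (blkd y) := by
        have hone : (((1 : GL (Fin n) ℝ) : Matrix (Fin n) (Fin n) ℝ)).map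
            (fun r : ℝ => (r : ℂ)) = 1 :=
          Matrix.map_one _ Complex.ofReal_zero Complex.ofReal_one
        calc mact 1 y = dgC 1 * JR.mk4 (blk0 y) (blkv y) (blkw y) (blkd y) * dgC 1 := by
              rw [← JR.eq_mk4 y, mact, inv_one, hone]
          _ = _ := JR.dgC_mul_mk4_mul_dgC 1 1 (blk0 y) (blkv y) (blkw y) (blkd y)
      rw [h1, Matrix.one_mul, Matrix.mul_one, Matrix.one_mulVec, Matrix.vecMul_one]
      rw [JR.eq_mk4 y']
      have e0 : blk0 y = blk0 y' := by
        ext i j; exact absurd i.isLt (by omega)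
      have ev : blkv y = blkv y' := by
        funext i; exact absurd i.isLt (by omega)
      have ew : blkw y = blkw y' := by
        funext i; exact absurd i.isLt (by omega)
      rw [e0, ev, ew, hd]
    · -- main case 0 < n
      set A := blk0 y with hA
      set A' := blk0 y' with hA'
      set v := blkv y with hv
      set v' := blkv y' with hv'
      set w := blkw y with hw
      set w' := blkw y' with hw'
      have hC : IsUnit (JR.Cm A v) := JR.isUnit_Cm A v hrs.1
      have hC' : IsUnit (JR.Cm A' v') := JR.isUnit_Cm A' v' hrs'.1
      have hdet : IsUnit (JR.Cm A v).det := (Matrix.isUnit_iff_isUnit_det _).1 hC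
      have hdet' : IsUnit (JR.Cm A' v').det := (Matrix.isUnit_iff_isUnit_det _).1 hC'
      set CC := JR.Cm A v with hCC
      set CC' := JR.Cm A' v' with hCC'
      have hCi : CC * CC⁻¹ = 1 := Matrix.mul_nonsing_inv _ hdet
      have hiC : CC⁻¹ * CC = 1 := Matrix.nonsing_inv_mul _ hdet
      have hCi' : CC' * CC'⁻¹ = 1 := Matrix.mul_nonsing_inv _ hdet'
      set gc := CC' * CC⁻¹ with hgc
      -- key relation (a): gc * A = A' * gc
      have hKA : A * CC = CC * JR.Kmat n A.charpoly := JR.mul_Cm A v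
      have hKA' : A' * CC' = CC' * JR.Kmat n A.charpoly := by
        rw [hp]; exact JR.mul_Cm A' v'
      have hiCA : CC⁻¹ * A = JR.Kmat n A.charpoly * CC⁻¹ := by
        calc CC⁻¹ * A = CC⁻¹ * (A * CC) * CC⁻¹ := by
              simp only [Matrix.mul_assoc, hCi, Matrix.mul_one]
          _ = CC⁻¹ * CC * (JR.Kmat n A.charpoly * CC⁻¹) := by
              rw [hKA]; simp only [Matrix.mul_assoc]
          _ = _ := by rw [hiC, Matrix.one_mul]
      have key1 : gc * A = A' * gc := by
        calc gc * A = CC' * (CC⁻¹ * A) := by simp only [hgc, Matrix.mul_assoc]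
          _ = CC' * JR.Kmat n A.charpoly * CC⁻¹ := by
              rw [hiCA]; simp only [Matrix.mul_assoc]
          _ = A' * CC' * CC⁻¹ := by rw [← hKA']
          _ = A' * gc := by simp only [hgc, Matrix.mul_assoc]
      -- key relation (b): gc *ᵥ v = v'
      have hv0 : CC *ᵥ Pi.single (⟨0, hn⟩ : Fin n) 1 = v := by
        rw [JR.Cm_mulVec_single]
        simp
      have hv0' : CC' *ᵥ Pi.single (⟨0, hn⟩ : Fin n) 1 = v' := by
        rw [JR.Cm_mulVec_single]
        simp
      have key2 : gc *ᵥ v = v' := by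
        rw [← hv0, Matrix.mulVec_mulVec,
          show gc * CC = CC' by
            rw [hgc, Matrix.mul_assoc, hiC, Matrix.mul_one],
          hv0']
      -- key relation (c): w' ᵥ* gc = w
      have hwc : w' ᵥ* CC' = w ᵥ* CC := by
        funext k
        exact (hmk k).symm
      have key3 : w' ᵥ* gc = w := by
        rw [hgc, ← Matrix.vecMul_vecMul, hwc, Matrix.vecMul_vecMul, hCi, Matrix.vecMul_one]
      -- reality of gc
      have hCstar : CC.map (starRingEnd ℂ) = CC * JR.Dmat n :=
        JR.map_star_Cm A v (JR.sSet_blk0 hy) (JR.sSet_blkv hy)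
      have hCstar' : CC'.map (starRingEnd ℂ) = CC' * JR.Dmat n :=
        JR.map_star_Cm A' v' (JR.sSet_blk0 hy') (JR.sSet_blkv hy')
      have h5 : gc * CC = CC' := by rw [hgc, Matrix.mul_assoc, hiC, Matrix.mul_one]
      have h6 : gc.map (starRingEnd ℂ) * (CC * JR.Dmat n) = CC' * JR.Dmat n := by
        rw [← hCstar, ← hCstar', ← Matrix.map_mul, h5]
      have h7 : gc.map (starRingEnd ℂ) * CC = CC' := by
        have := congrArg (fun M => M * JR.Dmat n) h6
        simp only [Matrix.mul_assoc, JR.Dmat_mul_Dmat, Matrix.mul_one] at this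
        exact this
      have hstar : gc.map (starRingEnd ℂ) = gc := by
        calc gc.map (starRingEnd ℂ) = gc.map (starRingEnd ℂ) * CC * CC⁻¹ := by
              simp only [Matrix.mul_assoc, hCi, Matrix.mul_one]
          _ = CC' * CC⁻¹ := by rw [h7]
          _ = gc := rfl
      -- real matrix g0
      set g0 : Matrix (Fin n) (Fin n) ℝ := Matrix.of fun i j => (gc i j).re with hg0def
      have hg0 : g0.map (fun r : ℝ => (r : ℂ)) = gc := by
        ext i j
        have := congrFun (congrFun hstar i) j
        simpa [g0] using Complex.conj_eq_iff_re.mp this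
      -- gc is a unit
      have hgcu : IsUnit gc := hC'.mul (Matrix.isUnit_nonsing_inv_iff.2 hC)
      have hdet0 : IsUnit g0.det := by
        rw [isUnit_iff_ne_zero]
        intro h
        have h2 : gc.det = 0 := by
          have hh : (g0.map (fun r : ℝ => (r : ℂ))).det = ((g0.det : ℝ) : ℂ) := by
            rw [show (fun r : ℝ => (r : ℂ)) = ⇑Complex.ofRealHom from rfl,
              ← RingHom.mapMatrix_apply, ← RingHom.map_det]
            rfl
          rw [← hg0, hh, h, Complex.ofReal_zero]
        exact (((Matrix.isUnit_iff_isUnit_det _).1 hgcu).ne_zero) h2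
      have hunit : IsUnit g0 := (Matrix.isUnit_iff_isUnit_det _).2 hdet0
      refine ⟨hunit.unit, ?_⟩
      set Bc : Matrix (Fin n) (Fin n) ℂ :=
        (((hunit.unit⁻¹ : GL (Fin n) ℝ) : Matrix (Fin n) (Fin n) ℝ)).map
          (fun r : ℝ => (r : ℂ)) with hBc
      have hGmat : ((hunit.unit : GL (Fin n) ℝ) : Matrix (Fin n) (Fin n) ℝ) = g0 :=
        hunit.unit_spec
      have hAc : (((hunit.unit : GL (Fin n) ℝ) : Matrix (Fin n) (Fin n) ℝ)).map
          (fun r : ℝ => (r : ℂ)) = gc := by rw [hGmat, hg0]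
      let f : Matrix (Fin n) (Fin n) ℝ →+* Matrix (Fin n) (Fin n) ℂ :=
        Complex.ofRealHom.mapMatrix
      have hgB : gc * Bc = 1 := by
        rw [← hAc, hBc,
          show (((hunit.unit : GL (Fin n) ℝ) : Matrix (Fin n) (Fin n) ℝ)).map
              (fun r : ℝ => (r : ℂ)) = f ((hunit.unit : GL (Fin n) ℝ) :
              Matrix (Fin n) (Fin n) ℝ) from rfl,
          show (((hunit.unit⁻¹ : GL (Fin n) ℝ) : Matrix (Fin n) (Fin n) ℝ)).map
              (fun r : ℝ => (r : ℂ)) = f ((hunit.unit⁻¹ : GL (Fin n) ℝ) :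
              Matrix (Fin n) (Fin n) ℝ) from rfl,
          ← _root_.map_mul, Units.mul_inv, _root_.map_one]
      have hblocks : mact hunit.unit y = JR.mk4 (gc * A * Bc) (gc *ᵥ v) (w ᵥ* Bc) (blkd y) := by
        calc mact hunit.unit y
            = dgC gc * JR.mk4 (blk0 y) (blkv y) (blkw y) (blkd y) * dgC Bc := by
              rw [← JR.eq_mk4 y, mact, hAc]
          _ = _ := JR.dgC_mul_mk4_mul_dgC gc Bc A v w (blkd y)
      rw [hblocks, JR.eq_mk4 y', ← hA', ← hv', ← hw', ← hd,
        show gc * A * Bc = A' by rw [key1, Matrix.mul_assoc, hgB, Matrix.mul_one],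
        key2,
        show w ᵥ* Bc = w' by rw [← key3, Matrix.vecMul_vecMul, hgB, Matrix.vecMul_one]]

end
end

section
/- An element of s_{n+1} of the form i·M, where M is the real symmetric matrix with diagonal (λ₁,...,λₙ,d), last column and row entries μ₁,...,μₙ, and zeros elsewhere, is regular semi-simple if and only if the λⱼ are pairwise distinct and all μⱼ are nonzero. -/
open Matrix MeasureTheory

noncomputable section

lemma span_pow_mul_top {n : ℕ} (c b : Fin n → ℂ) :
    Submodule.span ℂ {u : Fin n → ℂ | ∃ k : ℕ, u = fun j => c j ^ k * b j} = ⊤ ↔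
      Function.Injective c ∧ ∀ j, b j ≠ 0 := by
  constructor
  · intro h
    have hb : ∀ j, b j ≠ 0 := by
      intro j hbj
      have hker : Submodule.span ℂ {u : Fin n → ℂ | ∃ k : ℕ, u = fun j => c j ^ k * b j}
          ≤ LinearMap.ker (LinearMap.proj (R := ℂ) (φ := fun _ : Fin n => ℂ) j) := by
        rw [Submodule.span_le]
        rintro u ⟨k, rfl⟩
        simp [hbj]
      rw [h, top_le_iff, LinearMap.ker_eq_top] at hker
      have := congrFun (congrArg DFunLike.coe hker) (Pi.single j 1)
      simp at this
    refine ⟨?_, hb⟩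
    intro i i' hc
    by_contra hii
    set φ : (Fin n → ℂ) →ₗ[ℂ] ℂ :=
      b i' • LinearMap.proj (R := ℂ) (φ := fun _ : Fin n => ℂ) i
        - b i • LinearMap.proj (R := ℂ) (φ := fun _ : Fin n => ℂ) i' with hφ
    have hker : Submodule.span ℂ {u : Fin n → ℂ | ∃ k : ℕ, u = fun j => c j ^ k * b j}
        ≤ LinearMap.ker φ := by
      rw [Submodule.span_le]
      rintro u ⟨k, rfl⟩
      simp only [SetLike.mem_coe, LinearMap.mem_ker, hφ, LinearMap.sub_apply,
        LinearMap.smul_apply, LinearMap.proj_apply, smul_eq_mul]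
      rw [hc]; ring
    rw [h, top_le_iff, LinearMap.ker_eq_top] at hker
    have := congrFun (congrArg DFunLike.coe hker) (Pi.single i 1)
    simp only [hφ, LinearMap.sub_apply, LinearMap.smul_apply, LinearMap.proj_apply,
      LinearMap.zero_apply, smul_eq_mul] at this
    rw [Pi.single_eq_same, Pi.single_eq_of_ne (Ne.symm hii)] at this
    simp at this
    exact hb i' this
  · rintro ⟨hc, hb⟩
    set M : Matrix (Fin n) (Fin n) ℂ := Matrix.of fun k j => c j ^ (k : ℕ) * b j with hM
    have hMeq : M = (Matrix.vandermonde c)ᵀ * Matrix.diagonal b := by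
      ext k j
      simp [hM, Matrix.mul_apply, Matrix.diagonal, Matrix.vandermonde]
    have hdet : IsUnit M.det := by
      rw [hMeq, Matrix.det_mul, Matrix.det_transpose, Matrix.det_diagonal]
      exact (isUnit_iff_ne_zero.mpr (Matrix.det_vandermonde_ne_zero_iff.mpr hc)).mul
        (isUnit_iff_ne_zero.mpr (Finset.prod_ne_zero_iff.mpr fun j _ => hb j))
    have hinv : M⁻¹ * M = 1 := Matrix.nonsing_inv_mul M hdet
    rw [eq_top_iff]
    rw [← (Pi.basisFun ℂ (Fin n)).span_eq, Submodule.span_le]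
    rintro u ⟨i, rfl⟩
    have he : (Pi.basisFun ℂ (Fin n)) i
        = ∑ k : Fin n, M⁻¹ i k • (fun j => c j ^ (k : ℕ) * b j) := by
      funext j
      have h1 := congrFun (congrFun hinv i) j
      simp only [Matrix.mul_apply, Matrix.one_apply, hM, Matrix.of_apply] at h1
      simp only [Pi.basisFun_apply, Finset.sum_apply, Pi.smul_apply, smul_eq_mul]
      rw [h1]
      by_cases hij : i = j <;> simp [hij, Pi.single_apply]
    rw [SetLike.mem_coe, he]
    exact Submodule.sum_mem _ fun k _ =>
      Submodule.smul_mem _ _ (Submodule.subset_span ⟨k, rfl⟩)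

/-- the element `i·M` of `s_{n+1}` with arrow-shaped `M` is regular
semi-simple iff the `λⱼ` are pairwise distinct and all `μⱼ` are nonzero. -/
theorem stmt2 (n : ℕ) (lam mu : Fin n → ℝ) (d : ℝ) :
    RSspan (iArrow lam mu d) ↔ Function.Injective lam ∧ ∀ k, mu k ≠ 0 := by
  have hcs : ∀ x : Fin n, (finSumFinEquiv.symm x.castSucc : Fin n ⊕ Fin 1) = Sum.inl x :=
    fun x => finSumFinEquiv_symm_apply_castAdd x
  have h0 : blk0 (iArrow lam mu d) = Matrix.diagonal (fun j => Complex.I * (lam j : ℂ)) := by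
    ext i j
    simp [blk0, iArrow, iM, arrow, Matrix.reindex_apply, Matrix.submatrix_apply, hcs,
      Matrix.diagonal_apply, Matrix.fromBlocks]
    split <;> simp
  have hv : blkv (iArrow lam mu d) = fun j => Complex.I * (mu j : ℂ) := by
    funext i
    simp [blkv, iArrow, iM, arrow, Matrix.reindex_apply, Matrix.submatrix_apply, hcs,
      finSumFinEquiv_symm_last, Matrix.fromBlocks]
  have hw : blkw (iArrow lam mu d) = fun j => Complex.I * (mu j : ℂ) := by
    funext i
    simp [blkw, iArrow, iM, arrow, Matrix.reindex_apply, Matrix.submatrix_apply, hcs,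
      finSumFinEquiv_symm_last, Matrix.fromBlocks]
  have hset1 : {u : Fin n → ℂ | ∃ k : ℕ,
        u = (blk0 (iArrow lam mu d) ^ k) *ᵥ blkv (iArrow lam mu d)}
      = {u : Fin n → ℂ | ∃ k : ℕ,
        u = fun j => (Complex.I * (lam j : ℂ)) ^ k * (Complex.I * (mu j : ℂ))} := by
    rw [h0, hv]
    ext u
    constructor <;> rintro ⟨k, rfl⟩ <;>
      exact ⟨k, by funext j; simp [Matrix.diagonal_pow, Matrix.mulVec_diagonal]⟩
  have hset2 : {u : Fin n → ℂ | ∃ k : ℕ,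
        u = blkw (iArrow lam mu d) ᵥ* (blk0 (iArrow lam mu d) ^ k)}
      = {u : Fin n → ℂ | ∃ k : ℕ,
        u = fun j => (Complex.I * (lam j : ℂ)) ^ k * (Complex.I * (mu j : ℂ))} := by
    rw [h0, hw]
    ext u
    constructor
    · rintro ⟨k, rfl⟩
      refine ⟨k, ?_⟩
      funext j
      rw [Matrix.diagonal_pow, Matrix.vecMul_diagonal, Pi.pow_apply]
      ring
    · rintro ⟨k, rfl⟩
      refine ⟨k, ?_⟩
      funext j
      rw [Matrix.diagonal_pow, Matrix.vecMul_diagonal, Pi.pow_apply]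
      ring
  unfold RSspan
  rw [hset1, hset2, span_pow_mul_top, and_self]
  constructor
  · rintro ⟨hc, hb⟩
    refine ⟨fun i i' h => hc ?_, fun k hk => hb k (by simp [hk])⟩
    simp [h]
  · rintro ⟨hc, hb⟩
    constructor
    · intro i i' h
      apply hc
      have := mul_left_cancel₀ Complex.I_ne_zero h
      exact_mod_cast this
    · intro j
      simp [Complex.I_ne_zero, Complex.ofReal_eq_zero, hb j]


end
end

section
/- For a regular semi-simple y ∈ s_{n+1}, the set of positive definite H ∈ Sym_n(ℝ) such that y ∈ i·Sym(diag(H,1)) is a singleton if y matches to signature (n,0), and is empty otherwise. -/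
open Matrix MeasureTheory

noncomputable section

/-- The set of positive definite symmetric `H` with `y ∈ i·Sym(diag(H,1))`. -/
def posDefLocus {n : ℕ} (y : Matrix (Fin (n+1)) (Fin (n+1)) ℂ) :
    Set (Matrix (Fin n) (Fin n) ℝ) :=
  {H | Hᵀ = H ∧ H.PosDef ∧
    ∃ A : Matrix (Fin (n+1)) (Fin (n+1)) ℝ,
      Aᵀ = dgR H * A * (dgR H)⁻¹ ∧ y = iM A}

namespace S10
open Matrix

variable {n : ℕ}

lemma fse_cs (i : Fin n) : (finSumFinEquiv (m := n) (n := 1)).symm i.castSucc = Sum.inl i :=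
  finSumFinEquiv_symm_apply_castAdd i

lemma fse_last : (finSumFinEquiv (m := n) (n := 1)).symm (Fin.last n) = Sum.inr 0 :=
  finSumFinEquiv_symm_last

section blocks
variable {R : Type*} [CommRing R]

def tb0 (M : Matrix (Fin (n+1)) (Fin (n+1)) R) : Matrix (Fin n) (Fin n) R :=
  of fun i j => M i.castSucc j.castSucc
def tbv (M : Matrix (Fin (n+1)) (Fin (n+1)) R) : Fin n → R := fun i => M i.castSucc (Fin.last n)
def tbw (M : Matrix (Fin (n+1)) (Fin (n+1)) R) : Fin n → R := fun j => M (Fin.last n) j.castSucc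
def tbd (M : Matrix (Fin (n+1)) (Fin (n+1)) R) : R := M (Fin.last n) (Fin.last n)

lemma mul_apply' (M N : Matrix (Fin (n+1)) (Fin (n+1)) R) (a b : Fin (n+1)) :
    (M * N) a b = (∑ k : Fin n, M a k.castSucc * N k.castSucc b) +
      M a (Fin.last n) * N (Fin.last n) b := by
  rw [mul_apply, Fin.sum_univ_castSucc]

end blocks

-- dgR entry lemmas
lemma dgR_cc (H : Matrix (Fin n) (Fin n) ℝ) (i j : Fin n) :
    dgR H i.castSucc j.castSucc = H i j := by
  simp [dgR, reindex_apply, submatrix_apply, fse_cs]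

lemma dgR_cl (H : Matrix (Fin n) (Fin n) ℝ) (i : Fin n) :
    dgR H i.castSucc (Fin.last n) = 0 := by
  simp [dgR, reindex_apply, submatrix_apply, fse_cs, fse_last]

lemma dgR_lc (H : Matrix (Fin n) (Fin n) ℝ) (j : Fin n) :
    dgR H (Fin.last n) j.castSucc = 0 := by
  simp [dgR, reindex_apply, submatrix_apply, fse_cs, fse_last]

lemma dgR_ll (H : Matrix (Fin n) (Fin n) ℝ) :
    dgR H (Fin.last n) (Fin.last n) = 1 := by
  simp [dgR, reindex_apply, submatrix_apply, fse_last]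

lemma dgR_mul (P Q : Matrix (Fin n) (Fin n) ℝ) : dgR P * dgR Q = dgR (P * Q) := by
  have h : fromBlocks P 0 0 (1 : Matrix (Fin 1) (Fin 1) ℝ) * fromBlocks Q 0 0 1 =
      fromBlocks (P * Q) 0 0 1 := by rw [fromBlocks_multiply]; simp
  rw [dgR, dgR, dgR, ← reindexAlgEquiv_apply ℝ, ← reindexAlgEquiv_apply ℝ,
    ← reindexAlgEquiv_apply ℝ, ← _root_.map_mul, h]

lemma dgR_one : dgR (1 : Matrix (Fin n) (Fin n) ℝ) = 1 := by
  simp only [dgR, fromBlocks_one, reindex_apply, submatrix_one_equiv]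

lemma dgR_transpose (P : Matrix (Fin n) (Fin n) ℝ) : (dgR P)ᵀ = dgR Pᵀ := by
  simp only [dgR, reindex_apply, transpose_submatrix, fromBlocks_transpose]
  congr 1 <;> simp

lemma dgR_det (H : Matrix (Fin n) (Fin n) ℝ) : (dgR H).det = H.det := by
  simp only [dgR, reindex_apply, det_submatrix_equiv_self, det_fromBlocks_zero₂₁, det_one, mul_one]

lemma dgR_inv (S : Matrix (Fin n) (Fin n) ℝ) (hS : IsUnit S.det) :
    (dgR S)⁻¹ = dgR S⁻¹ := by
  apply inv_eq_right_inv
  rw [dgR_mul, mul_nonsing_inv _ hS, dgR_one]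

/-- The key block characterization of the symmetry condition. -/
lemma dgR_comm_iff (H : Matrix (Fin n) (Fin n) ℝ) (hH : Hᵀ = H)
    (A : Matrix (Fin (n+1)) (Fin (n+1)) ℝ) :
    Aᵀ * dgR H = dgR H * A ↔ ((tb0 A)ᵀ * H = H * tb0 A ∧ H *ᵥ tbv A = tbw A) := by
  constructor
  · intro h
    constructor
    · ext i j
      have := congrFun (congrFun h i.castSucc) j.castSucc
      rw [mul_apply', mul_apply'] at this
      simpa [dgR_cc, dgR_cl, dgR_lc, tb0, tbv, tbw, mul_apply, mulVec, dotProduct,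
        transpose_apply] using this
    · ext i
      have := congrFun (congrFun h i.castSucc) (Fin.last n)
      rw [mul_apply', mul_apply'] at this
      simpa [dgR_cc, dgR_cl, dgR_ll, tb0, tbv, tbw, mulVec, dotProduct, transpose_apply,
        mul_comm] using this.symm
  · rintro ⟨h0, hv⟩
    have hHs : ∀ i j, H i j = H j i := fun i j => congrFun (congrFun hH j) i
    have hv2 : ∀ i, (∑ k, H i k * A k.castSucc (Fin.last n)) = A (Fin.last n) i.castSucc := by
      intro i; simpa [mulVec, dotProduct, tbv, tbw] using congrFun hv i
    have h02 : ∀ i j, (∑ k, A k.castSucc i.castSucc * H k j)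
        = ∑ k, H i k * A k.castSucc j.castSucc := by
      intro i j
      simpa [mul_apply, tb0, transpose_apply] using congrFun (congrFun h0 i) j
    ext a b
    rw [mul_apply', mul_apply']
    induction a using Fin.lastCases with
    | last =>
      induction b using Fin.lastCases with
      | last => simp [dgR_ll, dgR_lc, dgR_cl, transpose_apply]
      | cast j =>
        simp only [transpose_apply, dgR_cc, dgR_cl, dgR_lc, dgR_ll, mul_zero, zero_mul,
          mul_one, one_mul, Finset.sum_const_zero, add_zero, zero_add]
        rw [← hv2 j]
        exact Finset.sum_congr rfl fun k _ => by rw [hHs k j]; ring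
    | cast i =>
      induction b using Fin.lastCases with
      | last =>
        simp only [transpose_apply, dgR_cc, dgR_cl, dgR_lc, dgR_ll, mul_zero, zero_mul,
          mul_one, one_mul, Finset.sum_const_zero, add_zero, zero_add]
        exact (hv2 i).symm
      | cast j =>
        simp only [transpose_apply, dgR_cc, dgR_cl, dgR_lc, dgR_ll, mul_zero, zero_mul,
          mul_one, one_mul, Finset.sum_const_zero, add_zero, zero_add]
        exact h02 i j


/-! ### Complexification -/

section mcsec
variable {m : Type*} [Fintype m] [DecidableEq m]

def mc (M : Matrix m m ℝ) : Matrix m m ℂ := M.map fun r => (r : ℂ)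
def vc (v : m → ℝ) : m → ℂ := fun i => (v i : ℂ)

lemma mc_inj {M N : Matrix m m ℝ} (h : mc M = mc N) : M = N := by
  ext i j
  have := congrFun (congrFun h i) j
  simp only [mc, map_apply] at this
  exact_mod_cast this

lemma mc_mul (M N : Matrix m m ℝ) : mc (M * N) = mc M * mc N := by
  ext i j; simp [mc, mul_apply]

lemma mc_one : mc (1 : Matrix m m ℝ) = 1 := by
  ext i j; by_cases h : i = j <;> simp [mc, one_apply, h]

lemma mc_pow (M : Matrix m m ℝ) (k : ℕ) : mc (M ^ k) = mc M ^ k := by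
  induction k with
  | zero => simpa using mc_one
  | succ k ih => rw [pow_succ, pow_succ, mc_mul, ih]

lemma mc_transpose (M : Matrix m m ℝ) : (mc M)ᵀ = mc Mᵀ := by
  ext i j; simp [mc, transpose_apply]

lemma mc_conjTranspose (M : Matrix m m ℝ) : (mc M)ᴴ = mc Mᵀ := by
  ext i j; simp [mc, conjTranspose_apply]

lemma mc_mulVec (M : Matrix m m ℝ) (v : m → ℝ) :
    mc M *ᵥ vc v = vc (M *ᵥ v) := by
  ext i; simp [mc, vc, mulVec, dotProduct]

lemma mc_vecMul (M : Matrix m m ℝ) (v : m → ℝ) :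
    vc v ᵥ* mc M = vc (v ᵥ* M) := by
  ext i; simp [mc, vc, vecMul, dotProduct]

lemma vc_dot (u v : m → ℝ) : vc u ⬝ᵥ vc v = ((u ⬝ᵥ v : ℝ) : ℂ) := by
  simp [vc, dotProduct]

lemma star_vc (v : m → ℝ) : star (vc v) = vc v := by
  ext i; simp [vc]

lemma mc_inv (S : Matrix m m ℝ) (hS : IsUnit S.det) : (mc S)⁻¹ = mc S⁻¹ := by
  apply inv_eq_right_inv
  rw [← mc_mul, mul_nonsing_inv _ hS, mc_one]

lemma isUnit_mc {S : Matrix m m ℝ} (hS : IsUnit S.det) : IsUnit (mc S) :=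
  ⟨⟨mc S, mc S⁻¹, by rw [← mc_mul, mul_nonsing_inv _ hS, mc_one],
    by rw [← mc_mul, nonsing_inv_mul _ hS, mc_one]⟩, rfl⟩

def reM (K : Matrix m m ℂ) : Matrix m m ℝ := of fun i j => (K i j).re

lemma reM_mc_mul (M : Matrix m m ℝ) (K : Matrix m m ℂ) : reM (mc M * K) = M * reM K := by
  ext i j
  simp [reM, mc, mul_apply, Complex.re_sum, Complex.re_ofReal_mul]

lemma reM_mul_mc (K : Matrix m m ℂ) (M : Matrix m m ℝ) : reM (K * mc M) = reM K * M := by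
  ext i j
  simp only [reM, mc, mul_apply, of_apply, map_apply, Complex.re_sum]
  exact Finset.sum_congr rfl fun k _ => by
    rw [mul_comm, Complex.re_ofReal_mul, mul_comm]

lemma star_smul_vc (v : m → ℝ) : star (Complex.I • vc v) = (-Complex.I) • vc v := by
  ext i
  simp [vc, Complex.ext_iff]

lemma re_star_dot_pos {η : m → ℂ} (hη : η ≠ 0) : 0 < (star η ⬝ᵥ η).re := by
  have h : (star η ⬝ᵥ η).re = ∑ i, Complex.normSq (η i) := by
    simp only [dotProduct, Pi.star_apply, Complex.re_sum]
    exact Finset.sum_congr rfl fun i _ => by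
      rw [Complex.star_def, ← Complex.normSq_eq_conj_mul_self]; simp
  rw [h]
  obtain ⟨i, hi⟩ := Function.ne_iff.mp hη
  exact Finset.sum_pos' (fun j _ => Complex.normSq_nonneg _)
    ⟨i, Finset.mem_univ i, Complex.normSq_pos.mpr hi⟩

lemma vc_eq_zero {v : m → ℝ} (h : vc v = 0) : v = 0 := by
  ext i
  have := congrFun h i
  simp only [vc, Pi.zero_apply, Complex.ofReal_eq_zero] at this
  simpa using this

end mcsec

/-! ### `iM` and blocks -/

lemma iM_apply (A : Matrix (Fin (n+1)) (Fin (n+1)) ℝ) (i j : Fin (n+1)) :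
    iM A i j = Complex.I * (A i j : ℂ) := rfl

lemma blk0_iM (A : Matrix (Fin (n+1)) (Fin (n+1)) ℝ) :
    blk0 (iM A) = Complex.I • mc (tb0 A) := by
  ext i j; simp [blk0, iM_apply, mc, tb0]

lemma blkv_iM (A : Matrix (Fin (n+1)) (Fin (n+1)) ℝ) :
    blkv (iM A) = Complex.I • vc (tbv A) := by
  ext i; simp [blkv, iM_apply, vc, tbv]

lemma blkw_iM (A : Matrix (Fin (n+1)) (Fin (n+1)) ℝ) :
    blkw (iM A) = Complex.I • vc (tbw A) := by
  ext i; simp [blkw, iM_apply, vc, tbw]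

lemma blkd_iM (A : Matrix (Fin (n+1)) (Fin (n+1)) ℝ) :
    blkd (iM A) = Complex.I * ((tbd A : ℝ) : ℂ) := rfl

lemma iM_inj {A B : Matrix (Fin (n+1)) (Fin (n+1)) ℝ} (h : iM A = iM B) : A = B := by
  ext i j
  have := congrFun (congrFun h i) j
  rw [iM_apply, iM_apply] at this
  exact_mod_cast mul_left_cancel₀ Complex.I_ne_zero this

lemma sSet_eq_iM {y : Matrix (Fin (n+1)) (Fin (n+1)) ℂ} (hy : y ∈ sSet n) :
    y = iM (of fun i j => (y i j).im) := by
  have h : ∀ i j, y i j + (starRingEnd ℂ) (y i j) = 0 := by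
    intro i j
    have := congrFun (congrFun hy i) j
    simpa using this
  ext i j
  have hre : (y i j).re = 0 := by
    have := h i j
    rw [Complex.add_conj] at this
    exact_mod_cast by
      have h2 : (2 : ℂ) ≠ 0 := two_ne_zero
      field_simp at this
      simpa using this
  rw [iM_apply]
  apply Complex.ext <;> simp [hre]

lemma ipow (M : Matrix (Fin n) (Fin n) ℝ) (k : ℕ) :
    (Complex.I • mc M) ^ k = (Complex.I ^ k) • mc (M ^ k) := by
  induction k with
  | zero => simp [mc_one]
  | succ k ih =>
    rw [pow_succ, ih, pow_succ, smul_mul_smul_comm, pow_succ, mc_mul]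


/-! ### Cayley–Hamilton span machinery -/

lemma pow_card_eq (B : Matrix (Fin n) (Fin n) ℂ) :
    B ^ n = -∑ i : Fin n, B.charpoly.coeff i • B ^ (i : ℕ) := by
  have hdeg : B.charpoly.natDegree = n := by simpa using B.charpoly_natDegree_eq_dim
  have hc : B.charpoly.coeff n = 1 := by
    have := B.charpoly_monic.coeff_natDegree
    rwa [hdeg] at this
  have h0 := B.aeval_self_charpoly
  rw [Polynomial.aeval_eq_sum_range, hdeg, Finset.sum_range_succ, hc, one_smul] at h0
  have h1 : ∑ i ∈ Finset.range n, B.charpoly.coeff i • B ^ i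
      = ∑ i : Fin n, B.charpoly.coeff i • B ^ (i : ℕ) :=
    (Fin.sum_univ_eq_sum_range (fun i => B.charpoly.coeff i • B ^ i) n).symm
  rw [h1] at h0
  linear_combination (norm := abel) h0

lemma pow_card_mulVec (B : Matrix (Fin n) (Fin n) ℂ) (v : Fin n → ℂ) :
    (B ^ n) *ᵥ v = -∑ i : Fin n, B.charpoly.coeff i • ((B ^ (i : ℕ)) *ᵥ v) := by
  rw [pow_card_eq, neg_mulVec, neg_inj]
  ext j
  simp only [mulVec, dotProduct, Finset.sum_apply, Pi.smul_apply, smul_eq_mul,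
    Matrix.sum_apply, Matrix.smul_apply, Finset.sum_mul, Finset.mul_sum]
  rw [Finset.sum_comm]
  exact Finset.sum_congr rfl fun i _ => Finset.sum_congr rfl fun k _ => by ring

lemma span_fin (B : Matrix (Fin n) (Fin n) ℂ) (v : Fin n → ℂ)
    (h : Submodule.span ℂ {u : Fin n → ℂ | ∃ k : ℕ, u = (B ^ k) *ᵥ v} = ⊤) :
    Submodule.span ℂ (Set.range fun k : Fin n => (B ^ (k : ℕ)) *ᵥ v) = ⊤ := by
  set W := Submodule.span ℂ (Set.range fun k : Fin n => (B ^ (k : ℕ)) *ᵥ v) with hW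
  have hgen : ∀ k : Fin n, (B ^ (k : ℕ)) *ᵥ v ∈ W := fun k =>
    Submodule.subset_span ⟨k, rfl⟩
  have hv : v ∈ W := by
    rcases Nat.eq_zero_or_pos n with h0 | h0
    · subst h0
      have : v = 0 := funext fun x => x.elim0
      rw [this]; exact zero_mem W
    · have hv0 : v = (B ^ ((⟨0, h0⟩ : Fin n) : ℕ)) *ᵥ v := by simp
      rw [hv0]; exact hgen _
  have hBW : ∀ u ∈ W, B *ᵥ u ∈ W := by
    intro u hu
    induction hu using Submodule.span_induction with
    | mem x hx =>
      rcases hx with ⟨k, rfl⟩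
      rcases lt_or_ge ((k : ℕ) + 1) n with hk | hk
      · have heq : B *ᵥ ((B ^ (k : ℕ)) *ᵥ v) = (B ^ ((⟨(k : ℕ)+1, hk⟩ : Fin n) : ℕ)) *ᵥ v := by
          rw [mulVec_mulVec, ← pow_succ']
        rw [heq]; exact hgen _
      · have hkn : (k : ℕ) + 1 = n := le_antisymm (Nat.succ_le_of_lt k.isLt) hk
        have heq : B *ᵥ ((B ^ (k : ℕ)) *ᵥ v) = (B ^ n) *ᵥ v := by
          rw [mulVec_mulVec, ← pow_succ', hkn]
        rw [heq, pow_card_mulVec]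
        exact neg_mem (Submodule.sum_mem _ fun i _ => Submodule.smul_mem _ _ (hgen i))
    | zero => simp
    | add x y _ _ hx hy => rw [mulVec_add]; exact add_mem hx hy
    | smul c x _ hx => rw [mulVec_smul]; exact Submodule.smul_mem _ _ hx
  have hle : {u : Fin n → ℂ | ∃ k : ℕ, u = (B ^ k) *ᵥ v} ⊆ (W : Set _) := by
    rintro _ ⟨k, rfl⟩
    induction k with
    | zero => simpa using hv
    | succ k ih =>
      have heq : (B ^ (k+1)) *ᵥ v = B *ᵥ ((B ^ k) *ᵥ v) := by
        rw [mulVec_mulVec, ← pow_succ']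
      rw [heq]; exact hBW _ ih
  rw [eq_top_iff, ← h]
  exact Submodule.span_le.mpr hle

/-! ### The column matrix of Krylov vectors -/

def colMat (B : Matrix (Fin n) (Fin n) ℂ) (v : Fin n → ℂ) : Matrix (Fin n) (Fin n) ℂ :=
  of fun i k => ((B ^ (k : ℕ)) *ᵥ v) i

lemma colMat_mulVec (B : Matrix (Fin n) (Fin n) ℂ) (v : Fin n → ℂ) (c : Fin n → ℂ) :
    colMat B v *ᵥ c = ∑ k : Fin n, c k • ((B ^ (k : ℕ)) *ᵥ v) := by
  ext i
  simp only [colMat, mulVec, dotProduct, of_apply, Finset.sum_apply, Pi.smul_apply,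
    smul_eq_mul]
  exact Finset.sum_congr rfl fun k _ => mul_comm _ _

lemma isUnit_colMat {B : Matrix (Fin n) (Fin n) ℂ} {v : Fin n → ℂ}
    (h : Submodule.span ℂ (Set.range fun k : Fin n => (B ^ (k : ℕ)) *ᵥ v) = ⊤) :
    IsUnit (colMat B v) := by
  rw [← Matrix.mulVec_surjective_iff_isUnit]
  intro x
  have hx : x ∈ Submodule.span ℂ (Set.range fun k : Fin n => (B ^ (k : ℕ)) *ᵥ v) := by
    rw [h]; trivial
  obtain ⟨c, hc⟩ := (Submodule.mem_span_range_iff_exists_fun ℂ).mp hx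
  exact ⟨c, by rw [colMat_mulVec]; exact hc⟩

def compC (p : Polynomial ℂ) : Matrix (Fin n) (Fin n) ℂ :=
  of fun i k => if (i : ℕ) = (k : ℕ) + 1 then 1 else if (k : ℕ) + 1 = n then -p.coeff i else 0

lemma colMat_rel (B : Matrix (Fin n) (Fin n) ℂ) (v : Fin n → ℂ) :
    B * colMat B v = colMat B v * compC B.charpoly := by
  ext i k
  have hL : (B * colMat B v) i k = ((B ^ ((k : ℕ) + 1)) *ᵥ v) i := by
    have h1 : (B ^ ((k : ℕ) + 1)) *ᵥ v = B *ᵥ ((B ^ (k : ℕ)) *ᵥ v) := by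
      rw [mulVec_mulVec, ← pow_succ']
    rw [h1]
    simp [colMat, mul_apply, mulVec, dotProduct]
  rw [hL, mul_apply]
  rcases lt_or_ge ((k : ℕ) + 1) n with hk | hk
  · rw [Finset.sum_eq_single (⟨(k : ℕ) + 1, hk⟩ : Fin n)]
    · simp [colMat, compC]
    · intro j _ hj
      have hj' : (j : ℕ) ≠ (k : ℕ) + 1 := fun hh => hj (Fin.ext hh)
      simp [compC, hj', Nat.ne_of_lt hk]
    · intro hmem; exact absurd (Finset.mem_univ _) hmem
  · have hkn : (k : ℕ) + 1 = n := le_antisymm (Nat.succ_le_of_lt k.isLt) hk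
    have hR : ∀ j : Fin n, colMat B v i j * compC B.charpoly j k
        = -(B.charpoly.coeff j • ((B ^ (j : ℕ)) *ᵥ v)) i := by
      intro j
      have hjn : (j : ℕ) ≠ n := Nat.ne_of_lt j.isLt
      simp [compC, colMat, hkn, hjn]
      ring
    rw [hkn, pow_card_mulVec]
    simp only [hR]
    simp [Finset.sum_apply]
  
lemma charpoly_conj {P : Matrix (Fin n) (Fin n) ℂ} (M : Matrix (Fin n) (Fin n) ℂ)
    (hP : IsUnit P) : (P * M * P⁻¹).charpoly = M.charpoly := by
  have hdet : IsUnit P.det := (isUnit_iff_isUnit_det P).mp hP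
  have h1 : P * P⁻¹ = 1 := mul_nonsing_inv P hdet
  set f := ((Polynomial.C : ℂ →+* Polynomial ℂ).mapMatrix :
    Matrix (Fin n) (Fin n) ℂ →+* Matrix (Fin n) (Fin n) (Polynomial ℂ)) with hf
  have hf1 : f P * f P⁻¹ = 1 := by rw [← _root_.map_mul, h1, _root_.map_one]
  have hcomm : f P * Matrix.scalar (Fin n) (Polynomial.X : Polynomial ℂ) * f P⁻¹
      = Matrix.scalar (Fin n) (Polynomial.X : Polynomial ℂ) := by
    rw [← (Matrix.scalar_commute (Polynomial.X : Polynomial ℂ)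
      (fun r' => Commute.all _ _) (f P)).eq, mul_assoc, hf1, mul_one]
  have hchar : charmatrix (P * M * P⁻¹) = f P * charmatrix M * f P⁻¹ := by
    rw [charmatrix, charmatrix, mul_sub, sub_mul]
    congr 1
    · exact hcomm.symm
    · rw [hf]
      simp only [RingHom.mapMatrix_apply]
      rw [← Matrix.map_mul, ← Matrix.map_mul]
  rw [Matrix.charpoly, Matrix.charpoly, hchar, det_mul, det_mul]
  have hd : (f P).det * (f P⁻¹).det = 1 := by rw [← det_mul, hf1, det_one]
  calc (f P).det * (charmatrix M).det * (f P⁻¹).det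
      = (charmatrix M).det * ((f P).det * (f P⁻¹).det) := by ring
    _ = (charmatrix M).det := by rw [hd, mul_one]

lemma ext_mulVec {M N : Matrix (Fin n) (Fin n) ℂ} (h : ∀ u, M *ᵥ u = N *ᵥ u) : M = N := by
  ext i j
  have := congrFun (h (Pi.single j 1)) i
  simpa [mulVec, dotProduct, Pi.single_apply, mul_ite] using this


/-! ### Unpacking the locus -/

def Aof (y : Matrix (Fin (n+1)) (Fin (n+1)) ℂ) : Matrix (Fin (n+1)) (Fin (n+1)) ℝ :=
  of fun i j => (y i j).im

lemma sSet_eq_iM' {y : Matrix (Fin (n+1)) (Fin (n+1)) ℂ} (hy : y ∈ sSet n) : y = iM (Aof y) :=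
  sSet_eq_iM hy

lemma blk0_sSet {y : Matrix (Fin (n+1)) (Fin (n+1)) ℂ} (hy : y ∈ sSet n) :
    blk0 y = Complex.I • mc (tb0 (Aof y)) := by
  rw [show blk0 y = blk0 (iM (Aof y)) from congrArg blk0 (sSet_eq_iM' hy), blk0_iM]

lemma blkv_sSet {y : Matrix (Fin (n+1)) (Fin (n+1)) ℂ} (hy : y ∈ sSet n) :
    blkv y = Complex.I • vc (tbv (Aof y)) := by
  rw [show blkv y = blkv (iM (Aof y)) from congrArg blkv (sSet_eq_iM' hy), blkv_iM]

lemma blkw_sSet {y : Matrix (Fin (n+1)) (Fin (n+1)) ℂ} (hy : y ∈ sSet n) :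
    blkw y = Complex.I • vc (tbw (Aof y)) := by
  rw [show blkw y = blkw (iM (Aof y)) from congrArg blkw (sSet_eq_iM' hy), blkw_iM]

lemma blkd_sSet {y : Matrix (Fin (n+1)) (Fin (n+1)) ℂ} (hy : y ∈ sSet n) :
    blkd y = Complex.I * ((tbd (Aof y) : ℝ) : ℂ) := by
  rw [show blkd y = blkd (iM (Aof y)) from congrArg blkd (sSet_eq_iM' hy), blkd_iM]

lemma dgR_det_isUnit {H : Matrix (Fin n) (Fin n) ℝ} (hpd : H.PosDef) : IsUnit (dgR H).det := by
  rw [dgR_det]; exact isUnit_iff_ne_zero.mpr hpd.det_pos.ne'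

lemma locus_props {y : Matrix (Fin (n+1)) (Fin (n+1)) ℂ} (hy : y ∈ sSet n)
    {H : Matrix (Fin n) (Fin n) ℝ} (hH : H ∈ posDefLocus y) :
    (tb0 (Aof y))ᵀ * H = H * tb0 (Aof y) ∧ H *ᵥ tbv (Aof y) = tbw (Aof y) := by
  obtain ⟨hsym, hpd, A, hA, hyA⟩ := hH
  have hAeq : A = Aof y := iM_inj (by rw [← hyA, ← sSet_eq_iM' hy])
  rw [hAeq] at hA
  have hdet := dgR_det_isUnit hpd
  have hA' : (Aof y)ᵀ * dgR H = dgR H * Aof y := by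
    rw [hA, mul_assoc (dgR H * Aof y), nonsing_inv_mul _ hdet, mul_one]
  exact (dgR_comm_iff H hsym (Aof y)).mp hA'

lemma locus_build {y : Matrix (Fin (n+1)) (Fin (n+1)) ℂ} (hy : y ∈ sSet n)
    {H : Matrix (Fin n) (Fin n) ℝ} (hsym : Hᵀ = H) (hpd : H.PosDef)
    (h1 : (tb0 (Aof y))ᵀ * H = H * tb0 (Aof y)) (h2 : H *ᵥ tbv (Aof y) = tbw (Aof y)) :
    H ∈ posDefLocus y := by
  refine ⟨hsym, hpd, Aof y, ?_, sSet_eq_iM' hy⟩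
  have hA' := (dgR_comm_iff H hsym (Aof y)).mpr ⟨h1, h2⟩
  have hdet := dgR_det_isUnit hpd
  rw [← hA', mul_assoc, mul_nonsing_inv _ hdet, mul_one]

/-! ### Uniqueness -/

lemma locus_unique {y : Matrix (Fin (n+1)) (Fin (n+1)) ℂ} (hy : y ∈ sSet n) (hrs : RSspan y)
    {H₁ H₂ : Matrix (Fin n) (Fin n) ℝ} (h1 : H₁ ∈ posDefLocus y) (h2 : H₂ ∈ posDefLocus y) :
    H₁ = H₂ := by
  obtain ⟨hc1, hv1⟩ := locus_props hy h1
  obtain ⟨hc2, hv2⟩ := locus_props hy h2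
  obtain ⟨hs1, -, -⟩ := h1
  obtain ⟨hs2, -, -⟩ := h2
  have key : ∀ H : Matrix (Fin n) (Fin n) ℝ, Hᵀ = H →
      (tb0 (Aof y))ᵀ * H = H * tb0 (Aof y) → H *ᵥ tbv (Aof y) = tbw (Aof y) →
      ∀ k : ℕ, mc H *ᵥ ((blk0 y ^ k) *ᵥ blkv y) = ((blk0 y)ᵀ ^ k) *ᵥ blkw y := by
    intro H hsym hcm hvw
    have hcm' : H * tb0 (Aof y) = (tb0 (Aof y))ᵀ * H := hcm.symm
    have hHB : mc H * blk0 y = (blk0 y)ᵀ * mc H := by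
      rw [blk0_sSet hy, transpose_smul, mul_smul_comm, smul_mul_assoc,
        mc_transpose, ← mc_mul, ← mc_mul, hcm']
    have hHv : mc H *ᵥ blkv y = blkw y := by
      rw [blkv_sSet hy, blkw_sSet hy, mulVec_smul, mc_mulVec, hvw]
    intro k
    induction k with
    | zero => simpa using hHv
    | succ k ih =>
      have e1 : (blk0 y ^ (k+1)) *ᵥ blkv y = blk0 y *ᵥ ((blk0 y ^ k) *ᵥ blkv y) := by
        rw [mulVec_mulVec, ← pow_succ']
      have e2 : ((blk0 y)ᵀ ^ (k+1)) *ᵥ blkw y = (blk0 y)ᵀ *ᵥ (((blk0 y)ᵀ ^ k) *ᵥ blkw y) := by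
        rw [mulVec_mulVec, ← pow_succ']
      rw [e1, e2, mulVec_mulVec, hHB, ← mulVec_mulVec, ih]
  have hagree : ∀ u, mc H₁ *ᵥ u = mc H₂ *ᵥ u := by
    have hsub : {u : Fin n → ℂ | ∃ k : ℕ, u = (blk0 y ^ k) *ᵥ blkv y} ⊆
        (LinearMap.eqLocus (mc H₁).mulVecLin (mc H₂).mulVecLin : Set _) := by
      rintro - ⟨k, rfl⟩
      show (mc H₁).mulVecLin _ = (mc H₂).mulVecLin _
      simp only [mulVecLin_apply]
      rw [key H₁ hs1 hc1 hv1 k, key H₂ hs2 hc2 hv2 k]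
    intro u
    have hu : u ∈ LinearMap.eqLocus (mc H₁).mulVecLin (mc H₂).mulVecLin := by
      have hle := Submodule.span_le.mpr hsub
      rw [hrs.1] at hle
      exact hle Submodule.mem_top
    simpa only [LinearMap.mem_eqLocus, mulVecLin_apply] using hu
  exact mc_inj (ext_mulVec hagree)

/-! ### Block lemmas for products with `dgR` -/

section dgRblocks
variable (S Q : Matrix (Fin n) (Fin n) ℝ) (M : Matrix (Fin (n+1)) (Fin (n+1)) ℝ)

lemma tb0_dgR_mul : tb0 (dgR S * M) = S * tb0 M := by
  ext i j; rw [tb0, of_apply, mul_apply', mul_apply]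
  simp [dgR_cc, dgR_cl, tb0]

lemma tbv_dgR_mul : tbv (dgR S * M) = S *ᵥ tbv M := by
  ext i; rw [tbv, mul_apply']
  simp [dgR_cc, dgR_cl, tbv, mulVec, dotProduct]

lemma tbw_dgR_mul : tbw (dgR S * M) = tbw M := by
  ext j; rw [tbw, mul_apply']
  simp [dgR_lc, dgR_ll, tbw]

lemma tbd_dgR_mul : tbd (dgR S * M) = tbd M := by
  rw [tbd, tbd, mul_apply']
  simp [dgR_lc, dgR_ll]

lemma tb0_mul_dgR : tb0 (M * dgR Q) = tb0 M * Q := by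
  ext i j; rw [tb0, of_apply, mul_apply', mul_apply]
  simp [dgR_cc, dgR_lc, tb0]

lemma tbv_mul_dgR : tbv (M * dgR Q) = tbv M := by
  ext i; rw [tbv, mul_apply']
  simp [dgR_cl, dgR_ll, tbv]

lemma tbw_mul_dgR : tbw (M * dgR Q) = tbw M ᵥ* Q := by
  ext j; rw [tbw, mul_apply']
  simp [dgR_cc, dgR_lc, tbw, vecMul, dotProduct]

lemma tbd_mul_dgR : tbd (M * dgR Q) = tbd M := by
  rw [tbd, tbd, mul_apply']
  simp [dgR_cl, dgR_ll]

end dgRblocks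

lemma conjTranspose_real {m : Type*} (M : Matrix m m ℝ) : Mᴴ = Mᵀ := by
  ext i j; simp [conjTranspose_apply]

lemma conj_pow {P M : Matrix (Fin n) (Fin n) ℂ} (h1 : P * P⁻¹ = 1) (h2 : P⁻¹ * P = 1) (k : ℕ) :
    (P * M * P⁻¹) ^ k = P * M ^ k * P⁻¹ := by
  induction k with
  | zero => rw [pow_zero, pow_zero, mul_one, h1]
  | succ k ih =>
    rw [pow_succ, ih, pow_succ]
    calc P * M ^ k * P⁻¹ * (P * M * P⁻¹)
        = P * M ^ k * (P⁻¹ * P) * (M * P⁻¹) := by simp only [mul_assoc]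
      _ = P * (M ^ k * M) * P⁻¹ := by rw [h2, mul_one]; simp only [mul_assoc]

/-! ### Part 2 : nonempty locus implies matching -/

open scoped MatrixOrder in
lemma locus_to_matches {y : Matrix (Fin (n+1)) (Fin (n+1)) ℂ} (hy : y ∈ sSet n)
    (hrs : RSspan y) {H : Matrix (Fin n) (Fin n) ℝ} (hH : H ∈ posDefLocus y) :
    MatchesN0 y := by
  obtain ⟨hc, hv⟩ := locus_props hy hH
  obtain ⟨hsym, hpd, -, -, -⟩ := hH
  have hpsd := hpd.posSemidef
  set S := CFC.sqrt H with hSdef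
  have hSH : S * S = H := CFC.sqrt_mul_sqrt_self H hpsd.nonneg
  have hSsym : Sᵀ = S := by
    have h := (CFC.sqrt_nonneg H).posSemidef.1
    rwa [Matrix.IsHermitian, conjTranspose_real] at h
  have hSdet : IsUnit S.det := by
    rw [isUnit_iff_ne_zero]
    intro h0
    have h2 : S.det * S.det = H.det := by rw [← det_mul, hSH]
    rw [h0, zero_mul] at h2
    exact hpd.det_pos.ne' h2.symm
  set A := Aof y with hAdef
  set A' := dgR S * A * dgR S⁻¹ with hA'
  set x := iM A' with hx
  have hScu : IsUnit (mc S) := isUnit_mc hSdet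
  have hScdet : IsUnit (mc S).det := (isUnit_iff_isUnit_det _).mp hScu
  have hScT : (mc S)ᵀ = mc S := by rw [mc_transpose, hSsym]
  have hSc1 : mc S * (mc S)⁻¹ = 1 := mul_nonsing_inv _ hScdet
  have hSc2 : (mc S)⁻¹ * mc S = 1 := nonsing_inv_mul _ hScdet
  have hA'0 : tb0 A' = S * tb0 A * S⁻¹ := by rw [hA', tb0_mul_dgR, tb0_dgR_mul]
  have hA'v : tbv A' = S *ᵥ tbv A := by rw [hA', tbv_mul_dgR, tbv_dgR_mul]
  have hA'd : tbd A' = tbd A := by rw [hA', tbd_mul_dgR, tbd_dgR_mul]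
  have F1 : blk0 x = mc S * blk0 y * (mc S)⁻¹ := by
    rw [hx, blk0_iM, hA'0, blk0_sSet hy, mc_inv S hSdet, mul_smul_comm, smul_mul_assoc,
      ← mc_mul, ← mc_mul]
  have F2 : blkv x = mc S *ᵥ blkv y := by
    rw [hx, blkv_iM, hA'v, blkv_sSet hy, mulVec_smul, mc_mulVec]
  have F4 : blkd x = blkd y := by
    rw [hx, blkd_iM, hA'd, blkd_sSet hy]
  -- x ∈ uSet
  have hDdet : IsUnit (dgR S).det := by rw [dgR_det]; exact hSdet
  have hDT : (dgR S)ᵀ = dgR S := by rw [dgR_transpose, hSsym]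
  have hDinvT : ((dgR S)⁻¹)ᵀ = (dgR S)⁻¹ := by rw [transpose_nonsing_inv, hDT]
  have hDDinv : dgR S * (dgR S)⁻¹ = 1 := mul_nonsing_inv _ hDdet
  have hDinvD : (dgR S)⁻¹ * dgR S = 1 := nonsing_inv_mul _ hDdet
  have hDD : dgR S * dgR S = dgR H := by rw [dgR_mul, hSH]
  have hADH : Aᵀ * dgR H = dgR H * A := (dgR_comm_iff H hsym A).mpr ⟨hc, hv⟩
  have hDGinv : dgR S⁻¹ = (dgR S)⁻¹ := (dgR_inv S hSdet).symm
  have hA'sym : A'ᵀ = A' := by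
    rw [hA', hDGinv]
    have e1 : (dgR S * A * (dgR S)⁻¹)ᵀ = (dgR S)⁻¹ * Aᵀ * dgR S := by
      rw [transpose_mul, transpose_mul, hDT, hDinvT, mul_assoc]
    rw [e1]
    have e2 : (dgR S)⁻¹ * Aᵀ * dgR S = (dgR S)⁻¹ * Aᵀ * (dgR S * dgR S) * (dgR S)⁻¹ := by
      rw [← mul_assoc ((dgR S)⁻¹ * Aᵀ) (dgR S) (dgR S),
        mul_assoc ((dgR S)⁻¹ * Aᵀ * dgR S) (dgR S) ((dgR S)⁻¹), hDDinv, mul_one]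
    rw [e2, hDD, mul_assoc ((dgR S)⁻¹) Aᵀ (dgR H), hADH, ← hDD]
    calc (dgR S)⁻¹ * (dgR S * dgR S * A) * (dgR S)⁻¹
        = ((dgR S)⁻¹ * dgR S) * (dgR S * A * (dgR S)⁻¹) := by simp only [mul_assoc]
      _ = dgR S * A * (dgR S)⁻¹ := by rw [hDinvD, one_mul]
  have hxu : x ∈ uSet n := by
    show xᴴ = -x
    rw [hx]
    show (Complex.I • mc A')ᴴ = -(Complex.I • mc A')
    rw [conjTranspose_smul, mc_conjTranspose, hA'sym]
    simp [Complex.conj_I]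
  -- Krylov transport
  have hxk : ∀ k : ℕ, (blk0 x ^ k) *ᵥ blkv x = mc S *ᵥ ((blk0 y ^ k) *ᵥ blkv y) := by
    intro k
    rw [F1, F2, conj_pow hSc1 hSc2, mulVec_mulVec, mul_assoc (mc S * blk0 y ^ k),
      hSc2, mul_one, ← mulVec_mulVec]
  have hspanU : RSspanU x := by
    show Submodule.span ℂ _ = ⊤
    have hset : {u : Fin n → ℂ | ∃ k : ℕ, u = (blk0 x ^ k) *ᵥ blkv x} =
        (mc S).mulVecLin '' {u : Fin n → ℂ | ∃ k : ℕ, u = (blk0 y ^ k) *ᵥ blkv y} := by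
      ext u
      constructor
      · rintro ⟨k, rfl⟩
        exact ⟨(blk0 y ^ k) *ᵥ blkv y, ⟨k, rfl⟩, by rw [mulVecLin_apply, ← hxk k]⟩
      · rintro ⟨-, ⟨k, rfl⟩, rfl⟩
        exact ⟨k, by rw [mulVecLin_apply, ← hxk k]⟩
    rw [hset, Submodule.span_image, hrs.1, Submodule.map_top, LinearMap.range_eq_top]
    intro u
    obtain ⟨w, hw⟩ := (mulVec_surjective_iff_isUnit.mpr hScu) u
    exact ⟨w, by rw [mulVecLin_apply, hw]⟩
  -- invariants
  have hvH : tbv A ᵥ* H = tbw A := by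
    have h3 : tbv A ᵥ* Hᵀ = H *ᵥ tbv A := vecMul_transpose H (tbv A)
    rw [hsym] at h3
    rw [h3, hv]
  have hvYH : blkv y ᵥ* mc H = blkw y := by
    rw [blkv_sSet hy, blkw_sSet hy, smul_vecMul, mc_vecMul, hvH]
  have hstarv : star (blkv x) = -blkv x := by
    rw [hx, blkv_iM, star_smul_vc, neg_smul]
  have hmom : ∀ k : Fin n,
      blkw y ⬝ᵥ ((blk0 y ^ (k : ℕ)) *ᵥ blkv y)
        = -(star (blkv x) ⬝ᵥ ((blk0 x ^ (k : ℕ)) *ᵥ blkv x)) := by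
    intro k
    have e2 : (mc S *ᵥ blkv y) ⬝ᵥ (mc S *ᵥ ((blk0 y ^ (k : ℕ)) *ᵥ blkv y))
        = blkw y ⬝ᵥ ((blk0 y ^ (k : ℕ)) *ᵥ blkv y) := by
      rw [show mc S *ᵥ blkv y = blkv y ᵥ* (mc S)ᵀ from (vecMul_transpose _ _).symm,
        dotProduct_mulVec, vecMul_vecMul, hScT, ← mc_mul, hSH, hvYH]
    rw [hstarv, neg_dotProduct, neg_neg, hxk, F2, e2]
  have hcp : (blk0 x).charpoly = (blk0 y).charpoly := by
    rw [F1]; exact charpoly_conj _ hScu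
  refine ⟨x, hxu, hspanU, ?_⟩
  refine Prod.ext hcp.symm (Prod.ext ?_ F4.symm)
  funext k
  exact hmom k

/-! ### Part 3 : matching implies nonempty locus -/

lemma matches_to_locus {y : Matrix (Fin (n+1)) (Fin (n+1)) ℂ} (hy : y ∈ sSet n)
    (hrs : RSspan y) (hm : MatchesN0 y) : ∃ H, H ∈ posDefLocus y := by
  obtain ⟨x, hxu, hxspan, hInv⟩ := hm
  have hxu' : xᴴ = -x := hxu
  have hchar : (blk0 x).charpoly = (blk0 y).charpoly := (congrArg Prod.fst hInv).symm
  have hmom : ∀ k : Fin n, blkw y ⬝ᵥ ((blk0 y ^ (k : ℕ)) *ᵥ blkv y)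
      = -(star (blkv x) ⬝ᵥ ((blk0 x ^ (k : ℕ)) *ᵥ blkv x)) :=
    fun k => congrFun (congrArg (fun z => z.2.1) hInv) k
  have hwu : blkw x = -star (blkv x) := by
    ext j
    have h0 := congrFun (congrFun hxu' (Fin.last n)) j.castSucc
    rw [conjTranspose_apply, neg_apply] at h0
    show x (Fin.last n) j.castSucc = -star (x j.castSucc (Fin.last n))
    rw [h0, neg_neg]
  have hXH : (blk0 x)ᴴ = -(blk0 x) := by
    ext i j
    have h0 := congrFun (congrFun hxu' i.castSucc) j.castSucc
    rw [conjTranspose_apply, neg_apply] at h0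
    rw [conjTranspose_apply, neg_apply]
    exact h0
  -- Krylov matrices
  have hPspan := span_fin (blk0 y) (blkv y) hrs.1
  have hQspan := span_fin (blk0 x) (blkv x) hxspan
  set P := colMat (blk0 y) (blkv y) with hPdef
  set Q := colMat (blk0 x) (blkv x) with hQdef
  have hPu : IsUnit P := isUnit_colMat hPspan
  have hQu : IsUnit Q := isUnit_colMat hQspan
  have hPdet : IsUnit P.det := (isUnit_iff_isUnit_det _).mp hPu
  set g := Q * P⁻¹ with hgdef
  have hgP : g * P = Q := by rw [hgdef, nonsing_inv_mul_cancel_right _ _ hPdet]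
  have hgu : IsUnit g := hQu.mul (isUnit_nonsing_inv_iff.mpr hPu)
  have hconj : g * blk0 y = blk0 x * g := by
    have heq : (g * blk0 y) * P = (blk0 x * g) * P := by
      rw [mul_assoc, colMat_rel (blk0 y) (blkv y), ← hPdef, ← mul_assoc, hgP,
        mul_assoc, hgP]
      rw [colMat_rel (blk0 x) (blkv x), ← hQdef, hchar]
    exact hPu.mul_right_cancel heq
  have hu : blkv x = g *ᵥ blkv y := by
    ext i
    have hn : 0 < n := i.pos
    have h0 := congrFun (congrFun hgP i) ⟨0, hn⟩
    rw [mul_apply] at h0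
    simp only [hPdef, hQdef, colMat, of_apply, Fin.val_mk, pow_zero, one_mulVec] at h0
    simpa [mulVec, dotProduct] using h0.symm
  have hw : blkw y = blkw x ᵥ* g := by
    have h1 : blkw y ᵥ* P = (blkw x ᵥ* g) ᵥ* P := by
      rw [vecMul_vecMul, hgP]
      ext k
      have hmk := hmom k
      have hL : (blkw y ᵥ* P) k = blkw y ⬝ᵥ ((blk0 y ^ (k : ℕ)) *ᵥ blkv y) := by
        simp [hPdef, colMat, vecMul, dotProduct]
      have hR : (blkw x ᵥ* Q) k = blkw x ⬝ᵥ ((blk0 x ^ (k : ℕ)) *ᵥ blkv x) := by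
        simp [hQdef, colMat, vecMul, dotProduct]
      rw [hL, hR, hmk, hwu, neg_dotProduct]
    have hPT : IsUnit Pᵀ := (isUnit_transpose P).mpr hPu
    have hinj : Function.Injective (Pᵀ).mulVec := mulVec_injective_iff_isUnit.mpr hPT
    apply hinj
    rw [mulVec_transpose, mulVec_transpose]
    exact h1
  -- the Gram matrix
  set K := gᴴ * g with hKdef
  have hBK : (blk0 y)ᴴ * K = -(K * blk0 y) := by
    have h1 : (blk0 y)ᴴ * gᴴ = -(gᴴ * blk0 x) := by
      calc (blk0 y)ᴴ * gᴴ = (g * blk0 y)ᴴ := (conjTranspose_mul g (blk0 y)).symm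
        _ = (blk0 x * g)ᴴ := by rw [hconj]
        _ = gᴴ * (blk0 x)ᴴ := conjTranspose_mul _ _
        _ = -(gᴴ * blk0 x) := by rw [hXH, mul_neg]
    calc (blk0 y)ᴴ * (gᴴ * g) = ((blk0 y)ᴴ * gᴴ) * g := by rw [mul_assoc]
      _ = -(gᴴ * blk0 x) * g := by rw [h1]
      _ = -(gᴴ * (blk0 x * g)) := by rw [neg_mul, mul_assoc]
      _ = -(gᴴ * (g * blk0 y)) := by rw [hconj]
      _ = -((gᴴ * g) * blk0 y) := by rw [mul_assoc gᴴ g (blk0 y)]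
  have hwK : blkw y = -(star (blkv y) ᵥ* K) := by
    rw [hw, hwu, hu, star_mulVec, neg_vecMul, vecMul_vecMul, hKdef]
  -- realification
  set A := Aof y with hAdef
  have hKh : Kᴴ = K := by rw [hKdef, conjTranspose_mul, conjTranspose_conjTranspose]
  set H := reM K with hHdef
  have hsym : Hᵀ = H := by
    ext i j
    have h0 := congrFun (congrFun hKh i) j
    rw [conjTranspose_apply] at h0
    show (K j i).re = (K i j).re
    rw [← h0, Complex.star_def, Complex.conj_re]
  have hBH : (blk0 y)ᴴ = (-Complex.I) • mc ((tb0 A)ᵀ) := by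
    rw [blk0_sSet hy, conjTranspose_smul, mc_conjTranspose]
    simp [Complex.conj_I, hAdef]
  have hcK : mc ((tb0 A)ᵀ) * K = K * mc (tb0 A) := by
    have h1 : ((-Complex.I) • mc ((tb0 A)ᵀ)) * K = -(K * (Complex.I • mc (tb0 A))) := by
      rw [← hBH, ← blk0_sSet hy]; exact hBK
    rw [smul_mul_assoc, mul_smul_comm, ← neg_smul] at h1
    exact smul_right_injective _ (neg_ne_zero.mpr Complex.I_ne_zero) h1
  have hH1 : (tb0 A)ᵀ * H = H * tb0 A := by
    have h2 := congrArg reM hcK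
    rwa [reM_mc_mul, reM_mul_mc] at h2
  have hvK : vc (tbw A) = vc (tbv A) ᵥ* K := by
    have h3 : Complex.I • vc (tbw A) = Complex.I • (vc (tbv A) ᵥ* K) := by
      rw [← blkw_sSet hy, hwK]
      have hsv : star (blkv y) = (-Complex.I) • vc (tbv A) := by
        rw [blkv_sSet hy, star_smul_vc]
      rw [hsv, smul_vecMul, ← neg_smul, neg_neg]
    exact smul_right_injective _ Complex.I_ne_zero h3
  have hvw' : tbw A = tbv A ᵥ* H := by
    ext j
    have h4 := congrFun hvK j
    have h5 : (((tbw A j : ℝ) : ℂ)).re = ((vc (tbv A) ᵥ* K) j).re := congrArg Complex.re h4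
    rw [Complex.ofReal_re] at h5
    rw [h5]
    simp only [vecMul, dotProduct, vc, Complex.re_sum, hHdef, reM, of_apply]
    exact Finset.sum_congr rfl fun i _ => Complex.re_ofReal_mul _ _
  have hH2 : H *ᵥ tbv A = tbw A := by
    have h5 : tbv A ᵥ* Hᵀ = H *ᵥ tbv A := vecMul_transpose H (tbv A)
    rw [hsym] at h5
    rw [← h5, ← hvw']
  have hpd : H.PosDef := by
    rw [posDef_iff_dotProduct_mulVec]
    constructor
    · show Hᴴ = H
      rw [conjTranspose_real, hsym]
    · intro ξ hξ
      have hζ : vc ξ ≠ 0 := fun h0 => hξ (vc_eq_zero h0)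
      have hη : g *ᵥ vc ξ ≠ 0 := by
        intro h0
        have hginj : Function.Injective g.mulVec := mulVec_injective_iff_isUnit.mpr hgu
        exact hζ (hginj (by rw [h0, mulVec_zero]))
      have hKζ : star (vc ξ) ⬝ᵥ (K *ᵥ vc ξ) = star (g *ᵥ vc ξ) ⬝ᵥ (g *ᵥ vc ξ) := by
        rw [hKdef, ← mulVec_mulVec, dotProduct_mulVec, ← star_mulVec]
      have hquad : star ξ ⬝ᵥ (H *ᵥ ξ) = (star (vc ξ) ⬝ᵥ (K *ᵥ vc ξ)).re := by
        rw [star_vc, show star ξ = ξ from funext fun i => star_trivial _]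
        simp only [dotProduct, mulVec, Complex.re_sum, vc, hHdef, reM, of_apply]
        refine Finset.sum_congr rfl fun i _ => ?_
        rw [Complex.re_ofReal_mul]
        congr 1
        rw [Complex.re_sum]
        exact Finset.sum_congr rfl fun j _ => by
          rw [mul_comm (K i j) ((ξ j : ℂ)), Complex.re_ofReal_mul, mul_comm]
      rw [hquad, hKζ]
      exact re_star_dot_pos hη
  exact ⟨H, locus_build hy hsym hpd hH1 hH2⟩

end S10
/-- for regular semi-simple `y`, the set of positive definite
`H ∈ Sym_n(ℝ)` with `y ∈ i·Sym(diag(H,1))` is a singleton if `y` matches to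
signature `(n,0)`, and empty otherwise. -/
theorem stmt10 (n : ℕ) (y : Matrix (Fin (n+1)) (Fin (n+1)) ℂ)
    (hy : y ∈ sSet n) (hrs : RSspan y) :
    (MatchesN0 y → ∃! H, H ∈ posDefLocus y) ∧
    (¬ MatchesN0 y → posDefLocus y = ∅) := by
  constructor
  · intro hm
    obtain ⟨H, hH⟩ := S10.matches_to_locus hy hrs hm
    exact ⟨H, hH, fun H' hH' => S10.locus_unique hy hrs hH' hH⟩
  · intro hm
    rw [Set.eq_empty_iff_forall_notMem]
    exact fun H hH => hm (S10.locus_to_matches hy hrs hH)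

end
end

section
/- If y ∈ s_{n+1} is regular semi-simple and y₀ (the upper-left n×n block) is diagonal with distinct purely imaginary eigenvalues i·λ₁,...,i·λₙ, and H is a positive definite symmetric matrix with y ∈ i·Sym(diag(H,1)), then H is diagonal, H = diag(μ'₁/μ₁, ..., μ'ₙ/μₙ), where i·μₖ are the entries of the last column of y and i·μ'ₖ the entries of its last row. -/
open Matrix MeasureTheory

noncomputable section

lemma finSumFinEquiv_symm_castSucc {n : ℕ} (i : Fin n) :
    finSumFinEquiv.symm (i.castSucc : Fin (n+1)) = Sum.inl i := by
  rw [Equiv.symm_apply_eq, finSumFinEquiv_apply_left]; rfl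

lemma finSumFinEquiv_symm_last' {n : ℕ} :
    finSumFinEquiv.symm (Fin.last n) = Sum.inr 0 := by
  rw [Equiv.symm_apply_eq, finSumFinEquiv_apply_right]; ext; simp

lemma dgR_cs_cs {n : ℕ} (H : Matrix (Fin n) (Fin n) ℝ) (i j : Fin n) :
    dgR H i.castSucc j.castSucc = H i j := by
  simp [dgR, Matrix.reindex_apply, Matrix.submatrix_apply,
    finSumFinEquiv_symm_castSucc]

lemma dgR_cs_last {n : ℕ} (H : Matrix (Fin n) (Fin n) ℝ) (i : Fin n) :
    dgR H i.castSucc (Fin.last n) = 0 := by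
  simp [dgR, Matrix.reindex_apply, Matrix.submatrix_apply,
    finSumFinEquiv_symm_castSucc, finSumFinEquiv_symm_last']

lemma dgR_last_cs {n : ℕ} (H : Matrix (Fin n) (Fin n) ℝ) (j : Fin n) :
    dgR H (Fin.last n) j.castSucc = 0 := by
  simp [dgR, Matrix.reindex_apply, Matrix.submatrix_apply,
    finSumFinEquiv_symm_castSucc, finSumFinEquiv_symm_last']

lemma dgR_last_last {n : ℕ} (H : Matrix (Fin n) (Fin n) ℝ) :
    dgR H (Fin.last n) (Fin.last n) = 1 := by
  simp [dgR, Matrix.reindex_apply, Matrix.submatrix_apply,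
    finSumFinEquiv_symm_last', Matrix.one_apply]

/-- uniqueness computation: if `y` is regular semi-simple with diagonal
upper-left block having distinct purely imaginary eigenvalues `i λₖ`, last column entries
`i μₖ` and last row entries `i μ'ₖ`, and `H` is positive definite symmetric with
`y ∈ i·Sym(diag(H,1))`, then `H = diag(μ'₁/μ₁, …, μ'ₙ/μₙ)`. -/
theorem stmt11 (n : ℕ) (y : Matrix (Fin (n+1)) (Fin (n+1)) ℂ)
    (lam mu mu' : Fin n → ℝ)
    (hy : y ∈ sSet n) (hrs : RSspan y)
    (hlam : Function.Injective lam)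
    (hdiag : blk0 y = Matrix.diagonal fun k => Complex.I * lam k)
    (hv : blkv y = fun k => Complex.I * mu k)
    (hw : blkw y = fun k => Complex.I * mu' k)
    (H : Matrix (Fin n) (Fin n) ℝ) (hsym : Hᵀ = H) (hpos : H.PosDef)
    (A : Matrix (Fin (n+1)) (Fin (n+1)) ℝ)
    (hA : Aᵀ = dgR H * A * (dgR H)⁻¹) (hyA : y = iM A) :
    H = Matrix.diagonal fun k => mu' k / mu k := by
  classical
  have hI : (Complex.I : ℂ) ≠ 0 := Complex.I_ne_zero
  -- entries of A
  have hyij : ∀ a b, y a b = Complex.I * (A a b : ℂ) := by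
    intro a b; rw [hyA]; simp [iM]
  have hA0 : ∀ i j : Fin n, A i.castSucc j.castSucc = if i = j then lam i else 0 := by
    intro i j
    have h2 := congrFun (congrFun hdiag i) j
    have h3 : y i.castSucc j.castSucc =
        Matrix.diagonal (fun k => Complex.I * (lam k : ℂ)) i j := h2
    rw [hyij, Matrix.diagonal_apply] at h3
    have h4 : Complex.I * (A i.castSucc j.castSucc : ℂ) =
        Complex.I * ((if i = j then lam i else 0 : ℝ) : ℂ) := by
      rw [h3]; split <;> simp
    have h5 := mul_left_cancel₀ hI h4
    exact_mod_cast h5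
  have hAv : ∀ i : Fin n, A i.castSucc (Fin.last n) = mu i := by
    intro i
    have h2 : y i.castSucc (Fin.last n) = Complex.I * (mu i : ℂ) := congrFun hv i
    rw [hyij] at h2
    exact_mod_cast mul_left_cancel₀ hI h2
  have hAw : ∀ j : Fin n, A (Fin.last n) j.castSucc = mu' j := by
    intro j
    have h2 : y (Fin.last n) j.castSucc = Complex.I * (mu' j : ℂ) := congrFun hw j
    rw [hyij] at h2
    exact_mod_cast mul_left_cancel₀ hI h2
  -- mu is nowhere zero
  have hmu : ∀ i, mu i ≠ 0 := by
    intro i0 h0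
    have hsp := hrs.1
    have hker : Submodule.span ℂ {u : Fin n → ℂ | ∃ k : ℕ, u = (blk0 y ^ k) *ᵥ blkv y}
        ≤ LinearMap.ker (LinearMap.proj i0 : (Fin n → ℂ) →ₗ[ℂ] ℂ) := by
      rw [Submodule.span_le]
      rintro u ⟨k, rfl⟩
      rw [SetLike.mem_coe, LinearMap.mem_ker, LinearMap.proj_apply]
      rw [hdiag, Matrix.diagonal_pow, Matrix.mulVec_diagonal, hv]
      simp [h0]
    rw [hsp, top_le_iff] at hker
    have h1 : (LinearMap.proj i0 : (Fin n → ℂ) →ₗ[ℂ] ℂ) (Pi.single i0 1) = 0 := by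
      rw [← LinearMap.mem_ker, hker]; trivial
    simp [LinearMap.proj_apply] at h1
  -- the key matrix identity
  have hdet : (dgR H).det ≠ 0 := by
    have h1 : (dgR H).det = H.det := by
      unfold dgR
      rw [Matrix.det_reindex_self, Matrix.det_fromBlocks_zero₂₁, Matrix.det_one, mul_one]
    rw [h1]; exact ne_of_gt hpos.det_pos
  have hE : Aᵀ * dgR H = dgR H * A := by
    rw [hA, Matrix.mul_assoc (dgR H * A), Matrix.nonsing_inv_mul _ (isUnit_iff_ne_zero.mpr hdet), Matrix.mul_one]
  -- off-diagonal entries of H vanish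
  have hHod : ∀ i j : Fin n, i ≠ j → H i j = 0 := by
    intro i j hij
    have hEij := congrFun (congrFun hE i.castSucc) j.castSucc
    rw [Matrix.mul_apply, Matrix.mul_apply, Fin.sum_univ_castSucc,
      Fin.sum_univ_castSucc] at hEij
    simp only [Matrix.transpose_apply, hA0, hAv, hAw, dgR_cs_cs, dgR_cs_last,
      dgR_last_cs, dgR_last_last, mul_zero, zero_mul, add_zero, mul_one, ite_mul,
      mul_ite] at hEij
    rw [Finset.sum_ite_eq' Finset.univ i (fun k => lam k * H k j),
      Finset.sum_ite_eq' Finset.univ j (fun k => H i k * lam k)] at hEij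
    simp only [Finset.mem_univ, if_true] at hEij
    -- hEij : lam i * H i j = H i j * lam j
    have hlne : lam i ≠ lam j := fun h => hij (hlam h)
    have : (lam i - lam j) * H i j = 0 := by ring_nf; linarith [hEij]
    rcases mul_eq_zero.mp this with h | h
    · exact absurd (sub_eq_zero.mp h) hlne
    · exact h
  -- diagonal entries
  ext i j
  by_cases hij : i = j
  · subst hij
    have hEil := congrFun (congrFun hE i.castSucc) (Fin.last n)
    rw [Matrix.mul_apply, Matrix.mul_apply, Fin.sum_univ_castSucc,
      Fin.sum_univ_castSucc] at hEil
    simp only [Matrix.transpose_apply, hA0, hAv, hAw, dgR_cs_cs, dgR_cs_last,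
      dgR_last_cs, dgR_last_last, mul_zero, zero_mul, add_zero, zero_add, mul_one,
      one_mul, ite_mul, mul_ite, Finset.sum_const_zero] at hEil
    -- hEil : mu' i = ∑ k, H i k * mu k
    have hsum : ∑ k : Fin n, H i k * mu k = H i i * mu i := by
      apply Finset.sum_eq_single
      · intro k _ hk; rw [hHod i k (Ne.symm hk), zero_mul]
      · intro h; exact absurd (Finset.mem_univ i) h
    rw [hsum] at hEil
    rw [Matrix.diagonal_apply_eq]
    field_simp [hmu i]
    linarith [hEil]
  · rw [Matrix.diagonal_apply_ne _ hij]
    exact hHod i j hij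

end
end

section
/- For the map ε: s_{n+1,rs} → {±1}, y ↦ η((-i)^{n(n+1)/2}·det(e, ey, ..., eyⁿ)) with e = (0,...,0,1), one has ε(g^{-1}·y·g) = η(g)·ε(y) for all g ∈ GL_n(ℝ) and regular semi-simple y, where g acts by y ↦ diag(g,1)^{-1} y diag(g,1); i.e. ε is a transfer factor. -/
open Matrix MeasureTheory

noncomputable section

/-- The row vector `e = (0, …, 0, 1)`. -/
def evec (n : ℕ) : Fin (n+1) → ℂ :=
  fun j => if j = Fin.last n then 1 else 0

/-- The matrix whose rows are `e, eA, eA², …, eAⁿ`. -/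
def rowsMat {n : ℕ} (A : Matrix (Fin (n+1)) (Fin (n+1)) ℂ) :
    Matrix (Fin (n+1)) (Fin (n+1)) ℂ :=
  Matrix.of fun k j => (evec n ᵥ* (A ^ (k : ℕ))) j

/-- The transfer factor `ε(y) = η((-i)^{n(n+1)/2}·det(e, ey, …, eyⁿ))` on the Lie algebra;
the displayed quantity is real and nonzero for regular semi-simple `y`, and `η` takes its
sign. -/
def epsLie {n : ℕ} (y : Matrix (Fin (n+1)) (Fin (n+1)) ℂ) : ℝ :=
  if 0 < (((-Complex.I))^(n*(n+1)/2) * (rowsMat y).det).re then 1 else -1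

/-- The sign character `η(g) = sign(det g)`. -/
def etaGL {n : ℕ} (g : GL (Fin n) ℝ) : ℝ :=
  if 0 < (g : Matrix (Fin n) (Fin n) ℝ).det then 1 else -1

lemma evec_vecMul {n : ℕ} (M : Matrix (Fin (n+1)) (Fin (n+1)) ℂ) :
    evec n ᵥ* M = M (Fin.last n) := by
  funext j
  simp [Matrix.vecMul, dotProduct, evec, ite_mul]

/-- The linear embedding `(u₁,…,uₙ) ↦ (u₁,…,uₙ,0)`. -/

def embedL (n : ℕ) : (Fin n → ℂ) →ₗ[ℂ] (Fin (n+1) → ℂ) where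
  toFun u := Fin.lastCases 0 u
  map_add' u v := by
    funext j
    induction j using Fin.lastCases <;> simp
  map_smul' c u := by
    funext j
    induction j using Fin.lastCases <;> simp

lemma embed_vecMul {n : ℕ} (y : Matrix (Fin (n+1)) (Fin (n+1)) ℂ) (u : Fin n → ℂ) :
    (embedL n u) ᵥ* y = embedL n (u ᵥ* blk0 y) + (u ⬝ᵥ blkv y) • evec n := by
  funext j
  have h1 : (embedL n u ᵥ* y) j = ∑ i : Fin (n+1), embedL n u i * y i j := rfl
  rw [h1, Fin.sum_univ_castSucc]
  induction j using Fin.lastCases with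
  | last =>
    simp [embedL, evec, blkv, dotProduct]
  | cast j =>
    have : (u ᵥ* blk0 y) j = ∑ i : Fin n, u i * y i.castSucc j.castSucc := rfl
    simp [embedL, evec, (Fin.castSucc_lt_last j).ne, this]

lemma evec_vecMul_y {n : ℕ} (y : Matrix (Fin (n+1)) (Fin (n+1)) ℂ) :
    evec n ᵥ* y = embedL n (blkw y) + blkd y • evec n := by
  rw [evec_vecMul]
  funext j
  induction j using Fin.lastCases with
  | last => simp [embedL, evec, blkd]
  | cast j => simp [embedL, evec, (Fin.castSucc_lt_last j).ne, blkw]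

lemma span_rows {n : ℕ} (y : Matrix (Fin (n+1)) (Fin (n+1)) ℂ)
    (hrs : Submodule.span ℂ {u : Fin n → ℂ | ∃ k : ℕ, u = blkw y ᵥ* (blk0 y ^ k)} = ⊤) :
    Submodule.span ℂ (Set.range (rowsMat y)) = ⊤ := by
  set W : Submodule ℂ (Fin (n+1) → ℂ) := Submodule.span ℂ (Set.range (rowsMat y)) with hWdef
  -- every power's row lies in W, via Cayley–Hamilton
  have hpow : ∀ m : ℕ, evec n ᵥ* y ^ m ∈ W := by
    intro m
    have hdeg : (Polynomial.X ^ m %ₘ y.charpoly).natDegree < n + 1 := by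
      have h := Polynomial.natDegree_modByMonic_lt (Polynomial.X ^ m)
        (Matrix.charpoly_monic y) ?_
      · rwa [Matrix.charpoly_natDegree_eq_dim, Fintype.card_fin] at h
      · intro h1
        have := Matrix.charpoly_natDegree_eq_dim (R := ℂ) y
        rw [h1] at this
        simp [Fintype.card_fin] at this
    have hy2 : y ^ m ∈ Submodule.span ℂ (Set.range fun i : Fin (n+1) => y ^ (i : ℕ)) := by
      rw [Matrix.pow_eq_aeval_mod_charpoly y m, Polynomial.aeval_eq_sum_range' hdeg]
      exact Submodule.sum_mem _ fun i hi =>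
        Submodule.smul_mem _ _ (Submodule.subset_span ⟨⟨i, Finset.mem_range.mp hi⟩, rfl⟩)
    let L : Matrix (Fin (n+1)) (Fin (n+1)) ℂ →ₗ[ℂ] (Fin (n+1) → ℂ) :=
      { toFun := fun M => evec n ᵥ* M
        map_add' := fun A B => Matrix.vecMul_add _ _ _
        map_smul' := fun c A => by
          funext j
          simp [Matrix.vecMul, dotProduct, Finset.mul_sum, mul_left_comm] }
    have hL : L (y ^ m) ∈ Submodule.map L
        (Submodule.span ℂ (Set.range fun i : Fin (n+1) => y ^ (i : ℕ))) :=
      Submodule.mem_map_of_mem hy2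
    rw [Submodule.map_span] at hL
    refine Submodule.span_le.mpr ?_ hL
    rintro _ ⟨_, ⟨i, rfl⟩, rfl⟩
    exact Submodule.subset_span ⟨i, rfl⟩
  have heW : evec n ∈ W := by
    have := hpow 0
    rwa [pow_zero, Matrix.vecMul_one] at this
  -- the set of u with (u,0) ∈ W
  set S : Submodule ℂ (Fin n → ℂ) := W.comap (embedL n) with hSdef
  have hwS : blkw y ∈ S := by
    have h1 : embedL n (blkw y)
        = (embedL n (blkw y) + blkd y • evec n) - blkd y • evec n :=
      (add_sub_cancel_right _ _).symm
    simp only [hSdef, Submodule.mem_comap]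
    rw [h1, ← evec_vecMul_y]
    have hp1 := hpow 1
    rw [pow_one] at hp1
    exact sub_mem hp1 (Submodule.smul_mem _ _ heW)
  -- W is stable under right multiplication by y
  have hWstab : ∀ v ∈ W, v ᵥ* y ∈ W := by
    intro v hv
    induction hv using Submodule.span_induction with
    | mem x hx =>
      obtain ⟨k, rfl⟩ := hx
      have : rowsMat y k ᵥ* y = evec n ᵥ* y ^ ((k : ℕ) + 1) := by
        show (evec n ᵥ* y ^ (k : ℕ)) ᵥ* y = _
        rw [Matrix.vecMul_vecMul, ← pow_succ]
      rw [this]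
      exact hpow _
    | zero => rw [Matrix.zero_vecMul]; exact W.zero_mem
    | add a b _ _ ha hb => rw [Matrix.add_vecMul]; exact W.add_mem ha hb
    | smul c a _ ha =>
      rw [Matrix.smul_vecMul]; exact W.smul_mem _ ha
  -- S is stable under right multiplication by blk0 y
  have hSstab : ∀ u ∈ S, u ᵥ* blk0 y ∈ S := by
    intro u hu
    simp only [hSdef, Submodule.mem_comap] at hu ⊢
    have h2 : embedL n (u ᵥ* blk0 y)
        = (embedL n u ᵥ* y) - (u ⬝ᵥ blkv y) • evec n := by
      rw [embed_vecMul]; exact (add_sub_cancel_right _ _).symm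
    rw [h2]
    exact sub_mem (hWstab _ hu) (Submodule.smul_mem _ _ heW)
  -- hence S = ⊤
  have hS : S = ⊤ := by
    rw [← top_le_iff, ← hrs]
    refine Submodule.span_le.mpr ?_
    rintro _ ⟨k, rfl⟩
    induction k with
    | zero => rw [pow_zero, Matrix.vecMul_one]; exact hwS
    | succ k ih =>
      rw [pow_succ, ← Matrix.vecMul_vecMul]
      exact hSstab _ ih
  -- conclude
  rw [← top_le_iff]
  intro v _
  have hv1 : v = embedL n (fun i => v i.castSucc) + v (Fin.last n) • evec n := by
    funext j
    induction j using Fin.lastCases with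
    | last => simp [embedL, evec]
    | cast j => simp [embedL, evec, (Fin.castSucc_lt_last j).ne]
  have hv2 : (fun i => v i.castSucc) ∈ S := hS ▸ Submodule.mem_top
  rw [hv1]
  exact W.add_mem (Submodule.mem_comap.mp hv2) (W.smul_mem _ heW)

lemma det_rowsMat_ne_zero {n : ℕ} (y : Matrix (Fin (n+1)) (Fin (n+1)) ℂ)
    (hrs : Submodule.span ℂ {u : Fin n → ℂ | ∃ k : ℕ, u = blkw y ᵥ* (blk0 y ^ k)} = ⊤) :
    (rowsMat y).det ≠ 0 := by
  have hs : Function.Surjective (rowsMat y).vecMul := by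
    have : LinearMap.range (rowsMat y).vecMulLinear = ⊤ := by
      rw [range_vecMulLinear]; exact span_rows y hrs
    exact LinearMap.range_eq_top.mp this
  exact ((Matrix.isUnit_iff_isUnit_det _).mp
    (Matrix.vecMul_surjective_iff_isUnit.mp hs)).ne_zero

lemma real_quantity {n : ℕ} (y : Matrix (Fin (n+1)) (Fin (n+1)) ℂ) (hy : y ∈ sSet n) :
    ∃ r : ℝ, (-Complex.I) ^ (n*(n+1)/2) * (rowsMat y).det = (r : ℂ) := by
  -- y = I • (B.map coe) for a real matrix B
  set B : Matrix (Fin (n+1)) (Fin (n+1)) ℝ := Matrix.of fun i j => (y i j).im with hB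
  have hyB : y = Complex.I • (B.map fun r : ℝ => (r : ℂ)) := by
    funext i j
    have h0 : y i j + (starRingEnd ℂ) (y i j) = 0 := congrFun (congrFun hy i) j
    have hre : (y i j).re = 0 := by
      have := congrArg Complex.re h0
      simp at this
      linarith
    apply Complex.ext <;> simp [hB, hre]
  -- express B.map coe as mapMatrix of a ring hom
  have hmap : (B.map fun r : ℝ => (r : ℂ)) = (Complex.ofRealHom).mapMatrix B := rfl
  have hBk : ∀ k : ℕ, (B.map fun r : ℝ => (r : ℂ)) ^ k
      = (B ^ k).map fun r : ℝ => (r : ℂ) := by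
    intro k
    rw [hmap, ← map_pow]
    rfl
  -- the real rows matrix
  set eR : Fin (n+1) → ℝ := fun j => if j = Fin.last n then 1 else 0 with heR
  set RR : Matrix (Fin (n+1)) (Fin (n+1)) ℝ :=
    Matrix.of fun k j => (eR ᵥ* (B ^ (k : ℕ))) j with hRR
  have hsm : ∀ (c : ℂ) (M : Matrix (Fin (n+1)) (Fin (n+1)) ℂ),
      evec n ᵥ* (c • M) = c • (evec n ᵥ* M) := by
    intro c M
    funext j
    simp [Matrix.vecMul, dotProduct, Finset.mul_sum, mul_left_comm]
  have hrows : rowsMat y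
      = Matrix.diagonal (fun k : Fin (n+1) => Complex.I ^ (k : ℕ))
        * ((Complex.ofRealHom).mapMatrix RR) := by
    funext k j
    have h1 : rowsMat y k j = (evec n ᵥ* (y ^ (k:ℕ))) j := rfl
    rw [h1, hyB, smul_pow, hsm, hBk]
    have h2 : (Matrix.diagonal (fun k : Fin (n+1) => Complex.I ^ (k : ℕ))
        * ((Complex.ofRealHom).mapMatrix RR)) k j
        = Complex.I ^ (k:ℕ) * ((Complex.ofRealHom).mapMatrix RR) k j :=
      Matrix.diagonal_mul _ _ _ j
    rw [h2]
    simp only [Pi.smul_apply, smul_eq_mul]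
    congr 1
    show (evec n ᵥ* ((B ^ (k:ℕ)).map fun r : ℝ => (r : ℂ))) j
      = ((RR k j : ℝ) : ℂ)
    have h4 : RR k j = (eR ᵥ* (B ^ (k:ℕ))) j := rfl
    rw [h4]
    simp [Matrix.vecMul, dotProduct, evec, heR, ite_mul,
      Matrix.map_apply, apply_ite (fun r : ℝ => (r : ℂ))]
  refine ⟨RR.det, ?_⟩
  rw [hrows, Matrix.det_mul, Matrix.det_diagonal, Finset.prod_pow_eq_pow_sum]
  have hsum : ∑ k : Fin (n+1), (k:ℕ) = n*(n+1)/2 := by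
    rw [Fin.sum_univ_eq_sum_range (fun i => i), Finset.sum_range_id]
    simp [Nat.mul_comm]
  have hdet : ((Complex.ofRealHom).mapMatrix RR).det = ((RR.det : ℝ) : ℂ) :=
    (RingHom.map_det _ _).symm
  rw [hdet, hsum, ← mul_assoc, ← mul_pow, neg_mul, Complex.I_mul_I, neg_neg,
    one_pow, one_mul]

lemma dgC_mul {n : ℕ} (A B : Matrix (Fin n) (Fin n) ℂ) :
    dgC A * dgC B = dgC (A * B) := by
  unfold dgC
  rw [Matrix.reindex_apply, Matrix.reindex_apply, Matrix.reindex_apply,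
    Matrix.submatrix_mul_equiv, Matrix.fromBlocks_multiply]
  simp

lemma dgC_one {n : ℕ} : dgC (1 : Matrix (Fin n) (Fin n) ℂ) = 1 := by
  unfold dgC
  rw [Matrix.fromBlocks_one, Matrix.reindex_apply, Matrix.submatrix_one_equiv]

lemma dgC_last_row {n : ℕ} (H : Matrix (Fin n) (Fin n) ℂ) :
    dgC H (Fin.last n) = evec n := by
  funext j
  have h1 : dgC H (Fin.last n) j
      = Matrix.fromBlocks H 0 0 (1 : Matrix (Fin 1) (Fin 1) ℂ)
        (finSumFinEquiv.symm (Fin.last n)) (finSumFinEquiv.symm j) := rfl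
  rw [h1, finSumFinEquiv_symm_last]
  rcases h : finSumFinEquiv.symm j with i | i
  · have hj : j ≠ Fin.last n := by
      intro hj
      rw [hj, finSumFinEquiv_symm_last] at h
      cases h
    simp [evec, hj]
  · have hi : i = 0 := Subsingleton.elim _ _
    have hj : j = Fin.last n := by
      apply finSumFinEquiv.symm.injective
      rw [h, finSumFinEquiv_symm_last, hi]
    subst hi
    simp [evec, hj]

lemma evec_vecMul_dgC {n : ℕ} (H : Matrix (Fin n) (Fin n) ℂ) :
    evec n ᵥ* dgC H = evec n := by
  rw [evec_vecMul, dgC_last_row]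

lemma det_dgC {n : ℕ} (H : Matrix (Fin n) (Fin n) ℂ) : (dgC H).det = H.det := by
  unfold dgC
  rw [Matrix.det_reindex_self, Matrix.det_fromBlocks_zero₂₁, Matrix.det_one, mul_one]

lemma det_rowsMat_mact {n : ℕ} (g : GL (Fin n) ℝ) (y : Matrix (Fin (n+1)) (Fin (n+1)) ℂ) :
    (rowsMat (mact g⁻¹ y)).det
      = (rowsMat y).det * (((g : Matrix (Fin n) (Fin n) ℝ).det : ℝ) : ℂ) := by
  set c : ℝ →+* ℂ := Complex.ofRealHom with hc
  set cg : Matrix (Fin n) (Fin n) ℂ := ((g : Matrix (Fin n) (Fin n) ℝ)).map c with hcg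
  set cig : Matrix (Fin n) (Fin n) ℂ :=
    (((g⁻¹ : GL (Fin n) ℝ) : Matrix (Fin n) (Fin n) ℝ)).map c with hcig
  have hmul1 : dgC cig * dgC cg = 1 := by
    rw [dgC_mul, hcig, hcg, ← Matrix.map_mul]
    have : ((g⁻¹ : GL (Fin n) ℝ) : Matrix (Fin n) (Fin n) ℝ)
        * (g : Matrix (Fin n) (Fin n) ℝ) = 1 := by
      rw [← Units.val_mul]
      simp
    rw [this, Matrix.map_one c (map_zero c) (map_one c), dgC_one]
  have hmul2 : dgC cg * dgC cig = 1 := by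
    rw [dgC_mul, hcg, hcig, ← Matrix.map_mul]
    have : (g : Matrix (Fin n) (Fin n) ℝ)
        * ((g⁻¹ : GL (Fin n) ℝ) : Matrix (Fin n) (Fin n) ℝ) = 1 := by
      rw [← Units.val_mul]
      simp
    rw [this, Matrix.map_one c (map_zero c) (map_one c), dgC_one]
  have hmact : mact g⁻¹ y = dgC cig * y * dgC cg := by
    unfold mact
    rw [inv_inv]
    rfl
  have hpowk : ∀ k : ℕ, (mact g⁻¹ y) ^ k = dgC cig * y ^ k * dgC cg := by
    intro k
    induction k with
    | zero => rw [pow_zero, pow_zero, mul_one, hmul1]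
    | succ k ih =>
      rw [pow_succ, ih, hmact, pow_succ]
      calc dgC cig * y ^ k * dgC cg * (dgC cig * y * dgC cg)
          = dgC cig * y ^ k * (dgC cg * dgC cig) * y * dgC cg := by
            simp only [mul_assoc]
        _ = dgC cig * (y ^ k * y) * dgC cg := by
            rw [hmul2, mul_one]
            simp only [mul_assoc]
  have hrows : rowsMat (mact g⁻¹ y) = rowsMat y * dgC cg := by
    funext k j
    have h1 : rowsMat (mact g⁻¹ y) k j = (evec n ᵥ* ((mact g⁻¹ y) ^ (k:ℕ))) j := rfl
    rw [h1, hpowk, mul_assoc, ← Matrix.vecMul_vecMul, evec_vecMul_dgC,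
      ← Matrix.vecMul_vecMul]
    have h2 : (rowsMat y * dgC cg) k j = ((evec n ᵥ* y ^ (k:ℕ)) ᵥ* dgC cg) j := by
      simp [Matrix.mul_apply, Matrix.vecMul, dotProduct, rowsMat]
    rw [h2]
  rw [hrows, Matrix.det_mul, det_dgC, hcg]
  congr 1
  exact (RingHom.map_det c _).symm

/-- `ε` is a transfer factor: `ε(g⁻¹·y·g) = η(g)·ε(y)` for all
`g ∈ GL_n(ℝ)` and regular semi-simple `y ∈ s_{n+1}`. -/
theorem stmt14 (n : ℕ) (g : GL (Fin n) ℝ) (y : Matrix (Fin (n+1)) (Fin (n+1)) ℂ)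
    (hy : y ∈ sSet n) (hrs : RSspan y) :
    epsLie (mact g⁻¹ y) = etaGL g * epsLie y := by
  obtain ⟨r, hr⟩ := real_quantity y hy
  have hrne : r ≠ 0 := by
    intro h0
    rw [h0] at hr
    have hd := det_rowsMat_ne_zero y hrs.2
    have hI : (-Complex.I) ^ (n*(n+1)/2) ≠ 0 := by
      apply pow_ne_zero
      simpa using Complex.I_ne_zero
    exact (mul_ne_zero hI hd) (by simpa using hr)
  set Dg : ℝ := (g : Matrix (Fin n) (Fin n) ℝ).det with hDg
  have hDgne : Dg ≠ 0 :=
    (((Matrix.isUnit_iff_isUnit_det _).mp g.isUnit).ne_zero)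
  have hnew : (-Complex.I) ^ (n*(n+1)/2) * (rowsMat (mact g⁻¹ y)).det
      = ((r * Dg : ℝ) : ℂ) := by
    rw [det_rowsMat_mact, ← mul_assoc, hr]
    push_cast
    ring
  have hre_old : ((-Complex.I) ^ (n*(n+1)/2) * (rowsMat y).det).re = r := by
    rw [hr, Complex.ofReal_re]
  have hre_new : ((-Complex.I) ^ (n*(n+1)/2) * (rowsMat (mact g⁻¹ y)).det).re
      = r * Dg := by
    rw [hnew, Complex.ofReal_re]
  unfold epsLie etaGL
  rw [hre_old, hre_new, ← hDg]
  rcases lt_or_gt_of_ne hrne with hrlt | hrgt <;>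
    rcases lt_or_gt_of_ne hDgne with hd | hd <;>
      split_ifs with h1 h2 <;>
        try norm_num
  all_goals
    exfalso
    rw [hDg] at hd
    nlinarith


end
end

section
/- For γ ∈ S_{n+1,ξ} (i.e. γγ̄ = 1 and det(γ-ξ) ≠ 0) and T = 2ξ(γ-ξ)^{-1}, one has det(e, e(1+T), ..., e(1+T)ⁿ) = (2ξ)^{n(n+1)/2}·det(γ-ξ)^{-n}·(-1)^{n(n+1)/2}·det(e, eγ, ..., eγⁿ), where e = (0,...,0,1). -/
open Matrix MeasureTheory

noncomputable section

section StmtAux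
open Polynomial Finset

def Jm (m : ℕ) : Matrix (Fin m) (Fin m) ℂ :=
  Matrix.of fun i j => if Fin.rev i = j then (1:ℂ) else 0

lemma det_Jm (m : ℕ) : (Jm m).det = (-1 : ℂ) ^ (∑ i ∈ range m, i) := by
  induction m with
  | zero => simp [Jm]
  | succ m ih =>
    rw [Matrix.det_succ_row_zero]
    rw [Finset.sum_eq_single (Fin.last m)]
    · have h0 : Jm (m+1) 0 (Fin.last m) = 1 := by
        simp [Jm, Fin.rev_zero]
      have hsub : (Jm (m+1)).submatrix Fin.succ (Fin.last m).succAbove = Jm m := by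
        ext i j
        simp only [Matrix.submatrix_apply, Fin.succAbove_last, Jm, Matrix.of_apply,
          Fin.rev_succ]
        simp [Fin.castSucc_inj]
      rw [h0, hsub, ih, Finset.sum_range_succ]
      simp [pow_add]
      ring
    · intro j _ hj
      have : Jm (m+1) 0 j = 0 := by
        simp only [Jm, Matrix.of_apply, Fin.rev_zero]
        simp [hj.symm]
      simp [this]
    · simp

def Dm (n : ℕ) (ξ : ℂ) : Matrix (Fin (n+1)) (Fin (n+1)) ℂ :=
  Matrix.of fun k j => if n ≤ (j:ℕ) + (k:ℕ) then
    ((k:ℕ).choose ((j:ℕ) + (k:ℕ) - n) : ℂ) * (2*ξ)^(n - (j:ℕ)) else 0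

def Mm (n : ℕ) (ξ : ℂ) : Matrix (Fin (n+1)) (Fin (n+1)) ℂ :=
  Matrix.of fun j l => ((X - C ξ)^(j:ℕ)).coeff (l:ℕ)

lemma det_Mm (n : ℕ) (ξ : ℂ) : (Mm n ξ).det = 1 := by
  have h : (Mm n ξ).BlockTriangular OrderDual.toDual := by
    intro j l hl
    have hjl : (j:ℕ) < (l:ℕ) := hl
    simp only [Mm, Matrix.of_apply]
    apply Polynomial.coeff_eq_zero_of_natDegree_lt
    rwa [Polynomial.natDegree_pow, Polynomial.natDegree_X_sub_C, mul_one]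
  rw [Matrix.det_of_lowerTriangular _ h]
  have : ∀ j : Fin (n+1), Mm n ξ j j = 1 := by
    intro j
    have hm : ((X - C ξ)^(j:ℕ)).Monic := (monic_X_sub_C ξ).pow (j:ℕ)
    have hd : ((X - C ξ)^(j:ℕ)).natDegree = (j:ℕ) := by
      rw [Polynomial.natDegree_pow, Polynomial.natDegree_X_sub_C, mul_one]
    simp only [Mm, Matrix.of_apply]
    have h2 := hm.coeff_natDegree
    rwa [hd] at h2
  simp [this]

lemma det_Dm_rev (n : ℕ) (ξ : ℂ) :
    (Matrix.of fun k j : Fin (n+1) => Dm n ξ k (Fin.rev j)).det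
      = (2*ξ) ^ (∑ i ∈ range (n+1), i) := by
  have hval : ∀ j : Fin (n+1), ((Fin.rev j : Fin (n+1)) : ℕ) = n - (j:ℕ) := by
    intro j; simp [Fin.val_rev]
  have h : (Matrix.of fun k j : Fin (n+1) => Dm n ξ k (Fin.rev j)).BlockTriangular
      OrderDual.toDual := by
    intro k j hl
    have hkj : (k:ℕ) < (j:ℕ) := hl
    have hj : (j:ℕ) ≤ n := Fin.is_le j
    simp only [Matrix.of_apply, Dm, hval]
    rw [if_neg]; omega
  rw [Matrix.det_of_lowerTriangular _ h]
  have hdiag : ∀ k : Fin (n+1),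
      (Matrix.of fun k j : Fin (n+1) => Dm n ξ k (Fin.rev j)) k k = (2*ξ)^(k:ℕ) := by
    intro k
    have hk : (k:ℕ) ≤ n := Fin.is_le k
    simp only [Matrix.of_apply, Dm, hval]
    rw [if_pos (by omega)]
    have h1 : n - (k:ℕ) + (k:ℕ) - n = 0 := by omega
    have h2 : n - (n - (k:ℕ)) = (k:ℕ) := by omega
    rw [h1, h2]
    simp
  rw [Finset.prod_congr rfl fun k _ => hdiag k]
  rw [Finset.prod_pow_eq_pow_sum]
  rw [Fin.sum_univ_eq_sum_range (fun i => i) (n+1)]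



lemma poly_expand (n : ℕ) (ξ : ℂ) (k : Fin (n+1)) :
    (X + C ξ)^(k:ℕ) * (X - C ξ)^(n-(k:ℕ))
      = ∑ j : Fin (n+1), C (Dm n ξ k j) * (X - C ξ)^(j:ℕ) := by
  have hk : (k:ℕ) ≤ n := Fin.is_le k
  have hX : (X + C ξ) = (X - C ξ) + C (2*ξ) := by
    rw [_root_.map_mul, map_ofNat]; ring
  rw [hX, add_pow, Finset.sum_mul]
  have hrhs : ∀ j : Fin (n+1), C (Dm n ξ k j) * (X - C ξ)^(j:ℕ)
      = (fun jn : ℕ => if n ≤ jn + (k:ℕ) then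
          C (((k:ℕ).choose (jn + (k:ℕ) - n) : ℂ) * (2*ξ)^(n - jn))
            * (X - C ξ)^jn else 0) (j:ℕ) := by
    intro j
    simp only [Dm, Matrix.of_apply]
    split
    · rfl
    · simp
  rw [Finset.sum_congr rfl fun j _ => hrhs j,
    Fin.sum_univ_eq_sum_range (fun jn : ℕ => if n ≤ jn + (k:ℕ) then
          C (((k:ℕ).choose (jn + (k:ℕ) - n) : ℂ) * (2*ξ)^(n - jn))
            * (X - C ξ)^jn else 0) (n+1),
    ← Finset.sum_filter]
  symm
  apply Finset.sum_nbij' (i := fun jn : ℕ => jn + (k:ℕ) - n)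
    (j := fun m : ℕ => m + (n - (k:ℕ)))
  · intro jn hjn
    simp only [Finset.mem_filter, Finset.mem_range] at hjn
    simp only [Finset.mem_range]
    omega
  · intro m hm
    simp only [Finset.mem_range] at hm
    simp only [Finset.mem_filter, Finset.mem_range]
    omega
  · intro jn hjn
    simp only [Finset.mem_filter, Finset.mem_range] at hjn
    omega
  · intro m hm
    simp only [Finset.mem_range] at hm
    omega
  · intro jn hjn
    simp only [Finset.mem_filter, Finset.mem_range] at hjn
    obtain ⟨m, rfl⟩ : ∃ m, jn = m + (n - (k:ℕ)) := ⟨jn + (k:ℕ) - n, by omega⟩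
    have h1 : m + (n - (k:ℕ)) + (k:ℕ) - n = m := by omega
    have h2 : n - (m + (n - (k:ℕ))) = (k:ℕ) - m := by omega
    rw [h1, h2, _root_.map_mul, map_pow, pow_add]
    simp only [Polynomial.C_eq_natCast]
    ring

def Cmat (n : ℕ) (ξ : ℂ) : Matrix (Fin (n+1)) (Fin (n+1)) ℂ :=
  Matrix.of fun k l => ((X + C ξ)^(k:ℕ) * (X - C ξ)^(n-(k:ℕ))).coeff (l:ℕ)

lemma Cmat_eq (n : ℕ) (ξ : ℂ) : Cmat n ξ = Dm n ξ * Mm n ξ := by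
  ext k l
  rw [Matrix.mul_apply]
  show ((X + C ξ)^(k:ℕ) * (X - C ξ)^(n-(k:ℕ))).coeff (l:ℕ) = _
  rw [poly_expand n ξ k, Polynomial.finset_sum_coeff]
  exact Finset.sum_congr rfl fun j _ => by
    rw [Polynomial.coeff_C_mul]; rfl

lemma Dm_eq (n : ℕ) (ξ : ℂ) :
    Dm n ξ = (Matrix.of fun k j : Fin (n+1) => Dm n ξ k (Fin.rev j)) * Jm (n+1) := by
  ext k l
  rw [Matrix.mul_apply]
  rw [Finset.sum_eq_single (Fin.rev l)]
  · simp [Jm, Fin.rev_rev]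
  · intro j _ hj
    have : Fin.rev j ≠ l := fun h => hj (by rw [← h, Fin.rev_rev])
    simp [Jm, this]
  · simp

lemma det_Cmat (n : ℕ) (ξ : ℂ) :
    (Cmat n ξ).det = (2*ξ) ^ (∑ i ∈ Finset.range (n+1), i)
      * (-1 : ℂ) ^ (∑ i ∈ Finset.range (n+1), i) := by
  rw [Cmat_eq, Matrix.det_mul, det_Mm, mul_one, Dm_eq, Matrix.det_mul,
    det_Dm_rev, det_Jm]

theorem rowsMat_mul_det_key (n : ℕ) (ξ : ℂ)
    (γ : Matrix (Fin (n+1)) (Fin (n+1)) ℂ)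
    (hdet : (γ - ξ • (1 : Matrix (Fin (n+1)) (Fin (n+1)) ℂ)).det ≠ 0) :
    (rowsMat (1 + (2 * ξ) • (γ - ξ • (1 : Matrix (Fin (n+1)) (Fin (n+1)) ℂ))⁻¹)).det
      * ((γ - ξ • (1 : Matrix (Fin (n+1)) (Fin (n+1)) ℂ)).det) ^ n
      = (Cmat n ξ).det * (rowsMat γ).det := by
  classical
  set s : Matrix (Fin (n+1)) (Fin (n+1)) ℂ := γ - ξ • 1 with hs_def
  have hu : IsUnit s.det := isUnit_iff_ne_zero.mpr hdet
  have hinv : s⁻¹ * s = 1 := Matrix.nonsing_inv_mul s hu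
  have hinv' : s * s⁻¹ = 1 := Matrix.mul_nonsing_inv s hu
  have hc1 : Commute s⁻¹ s := by
    unfold Commute SemiconjBy
    rw [hinv, hinv']
  have hT : (1 + (2*ξ) • s⁻¹) * s = γ + ξ • 1 := by
    rw [add_mul, one_mul, Matrix.smul_mul, hinv, hs_def, two_mul, add_smul]
    abel
  have hcomm : Commute (1 + (2*ξ) • s⁻¹) s :=
    Commute.add_left (Commute.one_left s) (hc1.smul_left (2*ξ))
  have hpow : ∀ k : ℕ, k ≤ n →
      (1 + (2*ξ) • s⁻¹)^k * s^n = (γ + ξ • 1)^k * s^(n-k) := by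
    intro k hk
    have h1 : s^n = s^k * s^(n-k) := by rw [← pow_add, Nat.add_sub_cancel' hk]
    rw [h1, ← mul_assoc, ← hcomm.mul_pow, hT]
  have haeval : ∀ k : ℕ, (γ + ξ • 1)^k * s^(n-k)
      = Polynomial.aeval γ ((X + C ξ)^k * (X - C ξ)^(n-k)) := by
    intro k
    simp only [_root_.map_mul, map_pow, map_add, map_sub, Polynomial.aeval_X, Polynomial.aeval_C,
      Algebra.algebraMap_eq_smul_one]
    rfl
  have hsum : ∀ k : Fin (n+1), (1 + (2*ξ) • s⁻¹)^(k:ℕ) * s^n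
      = ∑ j ∈ Finset.range (n+1),
          ((X + C ξ)^(k:ℕ) * (X - C ξ)^(n-(k:ℕ))).coeff j • γ^j := by
    intro k
    rw [hpow k (Fin.is_le k), haeval]
    have hdeg : ((X + C ξ)^(k:ℕ) * (X - C ξ)^(n-(k:ℕ))).natDegree < n+1 := by
      have h1 := Polynomial.natDegree_mul_le
        (p := (X + C ξ)^(k:ℕ)) (q := (X - C ξ)^(n-(k:ℕ)))
      have h2 : ((X + C ξ)^(k:ℕ)).natDegree = (k:ℕ) := by
        rw [Polynomial.natDegree_pow, Polynomial.natDegree_X_add_C, mul_one]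
      have h3 : ((X - C ξ)^(n-(k:ℕ))).natDegree = n - (k:ℕ) := by
        rw [Polynomial.natDegree_pow, Polynomial.natDegree_X_sub_C, mul_one]
      rw [h2, h3] at h1
      have := Fin.is_le k
      omega
    conv_lhs => rw [Polynomial.as_sum_range' _ (n+1) hdeg]
    rw [map_sum]
    refine Finset.sum_congr rfl fun j _ => ?_
    rw [Polynomial.aeval_monomial, Algebra.algebraMap_eq_smul_one, smul_mul_assoc, one_mul]
  have hMatEq : rowsMat (1 + (2*ξ) • s⁻¹) * s^n = Cmat n ξ * rowsMat γ := by
    ext k j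
    rw [Matrix.mul_apply, Matrix.mul_apply]
    have lhs1 : ∑ l, rowsMat (1 + (2*ξ) • s⁻¹) k l * (s^n) l j
        = (evec n ᵥ* ((1 + (2*ξ) • s⁻¹)^(k:ℕ) * s^n)) j := by
      rw [← Matrix.vecMul_vecMul]
      simp [Matrix.vecMul, dotProduct, rowsMat]
    have lhs2 : (evec n ᵥ* (∑ l ∈ Finset.range (n+1),
        ((X + C ξ)^(k:ℕ) * (X - C ξ)^(n-(k:ℕ))).coeff l • γ^l)) j
        = ∑ l ∈ Finset.range (n+1),
            ((X + C ξ)^(k:ℕ) * (X - C ξ)^(n-(k:ℕ))).coeff l * (evec n ᵥ* γ^l) j := by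
      simp only [Matrix.vecMul, dotProduct, Matrix.sum_apply, Matrix.smul_apply,
        smul_eq_mul, Finset.mul_sum]
      rw [Finset.sum_comm]
      refine Finset.sum_congr rfl fun l _ => ?_
      refine Finset.sum_congr rfl fun i _ => ?_
      ring
    rw [lhs1, hsum k, lhs2]
    exact (Fin.sum_univ_eq_sum_range (fun l =>
      ((X + C ξ)^(k:ℕ) * (X - C ξ)^(n-(k:ℕ))).coeff l * (evec n ᵥ* γ^l) j) (n+1)).symm
  calc (rowsMat (1 + (2 * ξ) • s⁻¹)).det * s.det ^ n
      = (rowsMat (1 + (2 * ξ) • s⁻¹) * s^n).det := by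
        rw [Matrix.det_mul, Matrix.det_pow]
    _ = (Cmat n ξ).det * (rowsMat γ).det := by rw [hMatEq, Matrix.det_mul]

theorem stmt15_aux (n : ℕ) (ξ : ℂ)
    (γ : Matrix (Fin (n+1)) (Fin (n+1)) ℂ)
    (hdet : (γ - ξ • (1 : Matrix (Fin (n+1)) (Fin (n+1)) ℂ)).det ≠ 0) :
    (rowsMat (1 + (2 * ξ) • (γ - ξ • (1 : Matrix (Fin (n+1)) (Fin (n+1)) ℂ))⁻¹)).det
      = (2 * ξ)^(n*(n+1)/2) *
        ((γ - ξ • (1 : Matrix (Fin (n+1)) (Fin (n+1)) ℂ)).det)⁻¹ ^ n *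
        (-1 : ℂ)^(n*(n+1)/2) * (rowsMat γ).det := by
  have key := rowsMat_mul_det_key n ξ γ hdet
  have hsr : ∑ i ∈ Finset.range (n+1), i = n*(n+1)/2 := by
    rw [Finset.sum_range_id, Nat.succ_sub_one, Nat.mul_comm]
  rw [det_Cmat, hsr] at key
  have hsn : ((γ - ξ • (1 : Matrix (Fin (n+1)) (Fin (n+1)) ℂ)).det) ^ n ≠ 0 :=
    pow_ne_zero _ hdet
  have h2 : (rowsMat (1 + (2 * ξ) • (γ - ξ • (1 : Matrix (Fin (n+1)) (Fin (n+1)) ℂ))⁻¹)).det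
      = ((2*ξ)^(n*(n+1)/2) * (-1 : ℂ)^(n*(n+1)/2) * (rowsMat γ).det)
        * (((γ - ξ • (1 : Matrix (Fin (n+1)) (Fin (n+1)) ℂ)).det) ^ n)⁻¹ := by
    rw [← key]
    field_simp
  rw [h2, inv_pow]
  ring

end StmtAux

/-- for `γ ∈ S_{n+1,ξ}` and `T = 2ξ(γ-ξ)⁻¹`,
`det(e, e(1+T), …, e(1+T)ⁿ) = (2ξ)^{n(n+1)/2}·det(γ-ξ)^{-n}·(-1)^{n(n+1)/2}·det(e, eγ, …, eγⁿ)`. -/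
theorem stmt15 (n : ℕ) (ξ : ℂ) (hξ : ‖ξ‖ = 1)
    (γ : Matrix (Fin (n+1)) (Fin (n+1)) ℂ)
    (hS : γ * γ.map (starRingEnd ℂ) = 1)
    (hdet : (γ - ξ • (1 : Matrix (Fin (n+1)) (Fin (n+1)) ℂ)).det ≠ 0) :
    (rowsMat (1 + (2 * ξ) • (γ - ξ • (1 : Matrix (Fin (n+1)) (Fin (n+1)) ℂ))⁻¹)).det
      = (2 * ξ)^(n*(n+1)/2) *
        ((γ - ξ • (1 : Matrix (Fin (n+1)) (Fin (n+1)) ℂ)).det)⁻¹ ^ n *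
        (-1 : ℂ)^(n*(n+1)/2) * (rowsMat γ).det := by
  exact stmt15_aux n ξ γ hdet

end
end
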